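/- arXiv:2201.01464 — 7 statements merged into one kernel-verified Lean document; each statement's English description precedes it below -/
import Mathlib

section
/- Let (R, m) be a commutative Noetherian local ring and let I₀, I₁, I₂ be ideals of R with I₁ ⊆ I₀, I₂ ⊆ I₀ ⊆ m. The R-module homomorphism φ : R/I₁ ⊕ R/I₂ → R/I₀ defined by φ(a mod I₁, b mod I₂) = (a − b) mod I₀ is surjective, and its kernel is a cyclic R-module if and only if I₁ + I₂ = I₀. -/
/-- Let `(R, m)` be a commutative Noetherian local ring and let
`I₀, I₁, I₂` be ideals of `R` with `I₁ ⊆ I₀`, `I₂ ⊆ I₀ ⊆ m`.  The `R`-module homomorphism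
`φ : R/I₁ ⊕ R/I₂ → R/I₀` defined by `φ(a mod I₁, b mod I₂) = (a − b) mod I₀` is surjective,
and its kernel is a cyclic `R`-module if and only if `I₁ + I₂ = I₀`. -/
theorem statement0 {R : Type*} [CommRing R] [IsNoetherianRing R] [IsLocalRing R]
    (I₀ I₁ I₂ : Ideal R) (h₁ : I₁ ≤ I₀) (h₂ : I₂ ≤ I₀)
    (h₀ : I₀ ≤ IsLocalRing.maximalIdeal R)
    (φ : ((R ⧸ I₁) × (R ⧸ I₂)) →ₗ[R] R ⧸ I₀)
    (hφ : ∀ a b : R,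
      φ (Ideal.Quotient.mk I₁ a, Ideal.Quotient.mk I₂ b) = Ideal.Quotient.mk I₀ (a - b)) :
    Function.Surjective φ ∧
      ((∃ x : (R ⧸ I₁) × (R ⧸ I₂), LinearMap.ker φ = Submodule.span R {x}) ↔
        I₁ + I₂ = I₀) := by
  have smul_mk : ∀ (J : Ideal R) (r a : R),
      r • (Ideal.Quotient.mk J a) = Ideal.Quotient.mk J (r * a) := by
    intro J r a
    rw [Algebra.smul_def, Ideal.Quotient.algebraMap_eq, ← map_mul]
  constructor
  · intro c
    obtain ⟨a, rfl⟩ := Ideal.Quotient.mk_surjective c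
    refine ⟨(Ideal.Quotient.mk I₁ a, Ideal.Quotient.mk I₂ 0), ?_⟩
    rw [hφ a 0, sub_zero]
  constructor
  · rintro ⟨x, hx⟩
    obtain ⟨u, hu⟩ := Ideal.Quotient.mk_surjective x.1
    obtain ⟨v, hv⟩ := Ideal.Quotient.mk_surjective x.2
    have hx' : x = (Ideal.Quotient.mk I₁ u, Ideal.Quotient.mk I₂ v) := by
      rw [Prod.ext_iff]; exact ⟨hu.symm, hv.symm⟩
    -- (1,1) is in the kernel, so (1,1) = r • x for some r
    have h11 : (Ideal.Quotient.mk I₁ 1, Ideal.Quotient.mk I₂ 1) ∈ LinearMap.ker φ := by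
      rw [LinearMap.mem_ker, hφ 1 1, sub_self, map_zero]
    rw [hx, Submodule.mem_span_singleton] at h11
    obtain ⟨r, hr⟩ := h11
    rw [hx', Prod.smul_mk, Prod.mk.injEq, smul_mk, smul_mk] at hr
    obtain ⟨hr1, hr2⟩ := hr
    rw [Ideal.Quotient.mk_eq_mk_iff_sub_mem] at hr1 hr2
    -- r*u and r*v are units, hence v is a unit
    have hvunit : IsUnit v := by
      have : IsUnit (r * v) := by
        by_contra hnu
        have : r * v ∈ IsLocalRing.maximalIdeal R := hnu
        have h1m : (1 : R) ∈ IsLocalRing.maximalIdeal R := by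
          have h3 := sub_mem this (h₀ (h₂ hr2))
          simp only [sub_sub_cancel] at h3
          exact h3
        exact (IsLocalRing.maximalIdeal.isMaximal R).ne_top (Ideal.eq_top_of_isUnit_mem _ h1m isUnit_one)
      exact isUnit_of_mul_isUnit_right this
    -- show I₀ ≤ I₁ + I₂
    have hle : I₀ ≤ I₁ + I₂ := by
      intro i hi
      have hik : (Ideal.Quotient.mk I₁ i, Ideal.Quotient.mk I₂ 0) ∈ LinearMap.ker φ := by
        rw [LinearMap.mem_ker, hφ i 0, sub_zero, Ideal.Quotient.eq_zero_iff_mem]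
        exact hi
      rw [hx, Submodule.mem_span_singleton] at hik
      obtain ⟨s, hs⟩ := hik
      rw [hx', Prod.smul_mk, Prod.mk.injEq, smul_mk, smul_mk] at hs
      obtain ⟨hs1, hs2⟩ := hs
      rw [Ideal.Quotient.mk_eq_mk_iff_sub_mem] at hs1 hs2
      have hsv : s * v ∈ I₂ := by simpa using hs2
      have hsI2 : s ∈ I₂ := by
        obtain ⟨w, hw⟩ := hvunit
        have h2 : s * v * (↑w⁻¹ : Rˣ) ∈ I₂ := Ideal.mul_mem_right _ _ hsv
        rwa [← hw, mul_assoc, Units.mul_inv, mul_one] at h2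
      have : i = (s * u - i) * (-1) + s * u := by ring
      rw [this]
      exact Ideal.add_mem _
        (Ideal.mem_sup_left (Ideal.mul_mem_right _ _ hs1))
        (Ideal.mem_sup_right (Ideal.mul_mem_right _ _ hsI2))
    exact le_antisymm (sup_le h₁ h₂) hle
  · intro hsum
    refine ⟨(Ideal.Quotient.mk I₁ 1, Ideal.Quotient.mk I₂ 1), le_antisymm ?_ ?_⟩
    · rintro ⟨p, q⟩ hpq
      obtain ⟨a, rfl⟩ := Ideal.Quotient.mk_surjective p
      obtain ⟨b, rfl⟩ := Ideal.Quotient.mk_surjective q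
      rw [LinearMap.mem_ker, hφ a b, Ideal.Quotient.eq_zero_iff_mem, ← hsum,
        Submodule.add_eq_sup, Submodule.mem_sup] at hpq
      obtain ⟨i, hi, j, hj, hij⟩ := hpq
      rw [Submodule.mem_span_singleton]
      refine ⟨b + j, ?_⟩
      rw [Prod.smul_mk, smul_mk, smul_mk, mul_one, Prod.mk.injEq,
        Ideal.Quotient.mk_eq_mk_iff_sub_mem, Ideal.Quotient.mk_eq_mk_iff_sub_mem]
      constructor
      · have : b + j - a = -i := by linear_combination hij
        rw [this]; exact neg_mem hi
      · simpa using hj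
    · rw [Submodule.span_le, Set.singleton_subset_iff]
      rw [SetLike.mem_coe, LinearMap.mem_ker, hφ 1 1, sub_self, map_zero]
end

section
/- Assume p acts as a nonzerodivisor on L₂ (i.e., for y ∈ L₂, p·y = 0 implies y = 0) and that r₁ is surjective. Then the projection L → L₂, (x,y) ↦ y, is surjective with kernel {(x,0) : x ∈ Ker(r₁)}, and there is a short exact sequence of A-modules 0 → Ker(r₁)/p·Ker(r₁) → L/pL → L₂/pL₂ → 0, in which the first map is induced by x ↦ (x,0) and the second by (x,y) ↦ y. -/
/-- The fiber product (glued module) of two module maps `r₁ : L₁ → W`, `r₂ : L₂ → W`,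
i.e. `L = {(x,y) ∈ L₁ ⊕ L₂ : r₁(x) = r₂(y)}` as a submodule of `L₁ × L₂`. -/
def gluedModule {A : Type*} [Ring A] {L₁ L₂ W : Type*}
    [AddCommGroup L₁] [AddCommGroup L₂] [AddCommGroup W]
    [Module A L₁] [Module A L₂] [Module A W]
    (r₁ : L₁ →ₗ[A] W) (r₂ : L₂ →ₗ[A] W) : Submodule A (L₁ × L₂) where
  carrier := {z | r₁ z.1 = r₂ z.2}
  add_mem' := by
    intro a b ha hb
    simp only [Set.mem_setOf_eq, Prod.fst_add, Prod.snd_add, map_add] at *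
    rw [ha, hb]
  zero_mem' := by simp
  smul_mem' := by
    intro c a ha
    simp only [Set.mem_setOf_eq, Prod.smul_fst, Prod.smul_snd, map_smul] at *
    rw [ha]

theorem mem_gluedModule {A : Type*} [Ring A] {L₁ L₂ W : Type*}
    [AddCommGroup L₁] [AddCommGroup L₂] [AddCommGroup W]
    [Module A L₁] [Module A L₂] [Module A W]
    (r₁ : L₁ →ₗ[A] W) (r₂ : L₂ →ₗ[A] W) (z : L₁ × L₂) :
    z ∈ gluedModule r₁ r₂ ↔ r₁ z.1 = r₂ z.2 := Iff.rfl

/-- The submodule `p·M` of all multiples of `p` in a module `M`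
(the submodule generated by the elements `p • x`). -/
def pMul {A : Type*} [Ring A] (p : A) (M : Type*) [AddCommGroup M] [Module A M] :
    Submodule A M :=
  Submodule.span A {y : M | ∃ x : M, y = p • x}

lemma mem_pMul {A : Type*} [Ring A] {p : A} (hp : ∀ a : A, p * a = a * p)
    {M : Type*} [AddCommGroup M] [Module A M] (y : M) :
    y ∈ pMul p M ↔ ∃ x : M, y = p • x := by
  constructor
  · intro h
    refine Submodule.span_induction (fun z hz => hz) ⟨0, by simp⟩ ?_ ?_ h
    · rintro a b - - ⟨x, rfl⟩ ⟨x', rfl⟩; exact ⟨x + x', by rw [smul_add]⟩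
    · rintro a z - ⟨x, rfl⟩
      exact ⟨a • x, by rw [smul_smul, smul_smul, hp]⟩
  · rintro ⟨x, rfl⟩
    exact Submodule.subset_span ⟨x, rfl⟩

lemma pMul_le_comap {A : Type*} [Ring A] {p : A} (_hp : ∀ a : A, p * a = a * p)
    {M N : Type*} [AddCommGroup M] [Module A M] [AddCommGroup N] [Module A N]
    (φ : M →ₗ[A] N) : pMul p M ≤ Submodule.comap φ (pMul p N) := by
  rw [pMul, Submodule.span_le]
  rintro y ⟨x, rfl⟩
  exact Submodule.subset_span ⟨φ x, by rw [map_smul]⟩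

/-- Assume `p` acts as a nonzerodivisor on `L₂` and `r₁` is surjective.
Then the projection `L → L₂`, `(x,y) ↦ y`, is surjective with kernel
`{(x,0) : x ∈ Ker r₁}`, and there is a short exact sequence of `A`-modules
`0 → Ker(r₁)/p·Ker(r₁) → L/pL → L₂/pL₂ → 0`, in which the first map is induced by
`x ↦ (x,0)` and the second by `(x,y) ↦ y`. -/
theorem statement1 {A : Type*} [Ring A] (p : A) (hp : ∀ a : A, p * a = a * p)
    {L₁ L₂ W : Type*} [AddCommGroup L₁] [AddCommGroup L₂] [AddCommGroup W]
    [Module A L₁] [Module A L₂] [Module A W]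
    (r₁ : L₁ →ₗ[A] W) (r₂ : L₂ →ₗ[A] W)
    (hreg : ∀ y : L₂, p • y = 0 → y = 0)
    (hsurj : Function.Surjective r₁) :
    Function.Surjective ((LinearMap.snd A L₁ L₂).comp (gluedModule r₁ r₂).subtype) ∧
    LinearMap.ker ((LinearMap.snd A L₁ L₂).comp (gluedModule r₁ r₂).subtype) =
      Submodule.comap (gluedModule r₁ r₂).subtype ((LinearMap.ker r₁).prod ⊥) ∧
    ∃ (fbar : (↥(LinearMap.ker r₁) ⧸ pMul p ↥(LinearMap.ker r₁)) →ₗ[A]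
        (↥(gluedModule r₁ r₂) ⧸ pMul p ↥(gluedModule r₁ r₂)))
      (gbar : (↥(gluedModule r₁ r₂) ⧸ pMul p ↥(gluedModule r₁ r₂)) →ₗ[A]
        (L₂ ⧸ pMul p L₂)),
      (∀ x : ↥(LinearMap.ker r₁),
        fbar (Submodule.Quotient.mk x) =
          Submodule.Quotient.mk
            (⟨((x : L₁), 0),
              (mem_gluedModule r₁ r₂ ((x : L₁), 0)).mpr
                (by rw [LinearMap.mem_ker.mp x.2, map_zero])⟩ :
              ↥(gluedModule r₁ r₂))) ∧
      (∀ z : ↥(gluedModule r₁ r₂),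
        gbar (Submodule.Quotient.mk z) = Submodule.Quotient.mk ((z : L₁ × L₂).2)) ∧
      Function.Injective fbar ∧ Function.Exact fbar gbar ∧ Function.Surjective gbar := by
  set L := gluedModule r₁ r₂ with hL
  let f : ↥(LinearMap.ker r₁) →ₗ[A] ↥L :=
    LinearMap.codRestrict L ((LinearMap.inl A L₁ L₂).comp (LinearMap.ker r₁).subtype)
      (fun x => by
        show r₁ (x : L₁) = r₂ 0
        rw [LinearMap.mem_ker.mp x.2, map_zero])
  let g : ↥L →ₗ[A] L₂ := (LinearMap.snd A L₁ L₂).comp L.subtype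
  have hgsurj : Function.Surjective g := by
    intro y
    obtain ⟨x, hx⟩ := hsurj (r₂ y)
    exact ⟨⟨(x, y), hx⟩, rfl⟩
  refine ⟨hgsurj, ?_, ?_⟩
  · ext z
    simp only [LinearMap.mem_ker, LinearMap.coe_comp, Function.comp_apply,
      LinearMap.snd_apply, Submodule.coe_subtype, Submodule.mem_comap,
      Submodule.mem_prod, Submodule.mem_bot]
    constructor
    · intro h
      refine ⟨?_, h⟩
      have := z.2
      rw [mem_gluedModule] at this
      rw [this, h, map_zero]
    · exact fun h => h.2
  · let fbar := Submodule.mapQ (pMul p ↥(LinearMap.ker r₁)) (pMul p ↥L) f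
      (pMul_le_comap hp f)
    let gbar := Submodule.mapQ (pMul p ↥L) (pMul p L₂) g (pMul_le_comap hp g)
    have hfbar : ∀ x : ↥(LinearMap.ker r₁),
        fbar (Submodule.Quotient.mk x) = Submodule.Quotient.mk (f x) :=
      fun x => Submodule.mapQ_apply _ _ _ x
    have hgbar : ∀ z : ↥L,
        gbar (Submodule.Quotient.mk z) = Submodule.Quotient.mk ((z : L₁ × L₂).2) :=
      fun z => Submodule.mapQ_apply _ _ _ z
    refine ⟨fbar, gbar, fun x => hfbar x, hgbar, ?_, ?_, ?_⟩
    · -- injectivity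
      rw [← LinearMap.ker_eq_bot, Submodule.eq_bot_iff]
      intro q hq
      obtain ⟨x, rfl⟩ := Submodule.Quotient.mk_surjective _ q
      rw [LinearMap.mem_ker, hfbar, Submodule.Quotient.mk_eq_zero] at hq
      obtain ⟨z, hz⟩ := (mem_pMul hp _).mp hq
      have hz' : ((x : L₁), (0 : L₂)) = p • (z : L₁ × L₂) := congrArg Subtype.val hz
      have h1 : (x : L₁) = p • (z : L₁ × L₂).1 := congrArg Prod.fst hz'
      have h2 : (0 : L₂) = p • (z : L₁ × L₂).2 := congrArg Prod.snd hz'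
      have hz2 : (z : L₁ × L₂).2 = 0 := hreg _ h2.symm
      have hzker : (z : L₁ × L₂).1 ∈ LinearMap.ker r₁ := by
        have := z.2
        rw [mem_gluedModule] at this
        rw [LinearMap.mem_ker, this, hz2, map_zero]
      rw [Submodule.Quotient.mk_eq_zero]
      exact (mem_pMul hp _).mpr ⟨⟨_, hzker⟩, Subtype.ext h1⟩
    · -- exactness
      intro c
      obtain ⟨z, rfl⟩ := Submodule.Quotient.mk_surjective _ c
      rw [hgbar, Submodule.Quotient.mk_eq_zero]
      constructor
      · intro hz
        obtain ⟨b, hb⟩ := (mem_pMul hp _).mp hz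
        obtain ⟨cc, hcc⟩ := hsurj (r₂ b)
        have hzmem : r₁ (z : L₁ × L₂).1 = r₂ (z : L₁ × L₂).2 := z.2
        have hx' : (z : L₁ × L₂).1 - p • cc ∈ LinearMap.ker r₁ := by
          rw [LinearMap.mem_ker, map_sub, map_smul, hcc, hzmem, hb, map_smul,
            sub_self]
        refine ⟨Submodule.Quotient.mk ⟨_, hx'⟩, ?_⟩
        rw [hfbar, Submodule.Quotient.eq]
        refine (mem_pMul hp _).mpr ⟨-⟨(cc, b), hcc⟩, ?_⟩
        apply Subtype.ext
        show ((z : L₁ × L₂).1 - p • cc, (0 : L₂)) - (z : L₁ × L₂)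
            = p • (-((cc, b) : L₁ × L₂))
        rw [Prod.ext_iff]
        refine ⟨?_, ?_⟩
        · show (z : L₁ × L₂).1 - p • cc - (z : L₁ × L₂).1 = p • (-cc)
          rw [smul_neg]; abel
        · show (0 : L₂) - (z : L₁ × L₂).2 = p • (-b)
          rw [smul_neg, hb]; abel
      · rintro ⟨q, hq⟩
        obtain ⟨x, rfl⟩ := Submodule.Quotient.mk_surjective _ q
        rw [hfbar, Submodule.Quotient.eq] at hq
        have hmem := pMul_le_comap hp g hq
        rw [Submodule.mem_comap, map_sub] at hmem
        have hgfx : g (f x) = 0 := rfl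
        rw [hgfx, zero_sub] at hmem
        exact neg_mem_iff.mp hmem
    · -- surjectivity of gbar
      intro q
      obtain ⟨y, rfl⟩ := Submodule.Quotient.mk_surjective _ q
      obtain ⟨x, hx⟩ := hsurj (r₂ y)
      exact ⟨Submodule.Quotient.mk ⟨(x, y), hx⟩, hgbar _⟩
end

section
/- Assume r₁ and r₂ are both surjective. Let σ be an A-module such that: (a) the map Hom_A(W,σ) → Hom_A(L₁,σ) given by precomposition with r₁ is an isomorphism; and (b) Hom_A(Ker(r₁), σ) = 0 or Hom_A(Ker(r₂), σ) = 0. Then the map Hom_A(L₂,σ) → Hom_A(L,σ) given by precomposition with the projection L → L₂, (x,y) ↦ y, is an isomorphism. -/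
/-- A linear map vanishing on the kernel of a surjective map factors through it. -/
lemma factor_through_surjective {A : Type*} [Ring A] {M N V : Type*}
    [AddCommGroup M] [AddCommGroup N] [AddCommGroup V]
    [Module A M] [Module A N] [Module A V]
    (p : M →ₗ[A] N) (hp : Function.Surjective p) (φ : M →ₗ[A] V)
    (h : LinearMap.ker p ≤ LinearMap.ker φ) :
    ∃ ψ : N →ₗ[A] V, ψ.comp p = φ := by
  let e := p.quotKerEquivOfSurjective hp
  refine ⟨((LinearMap.ker p).liftQ φ h).comp (e.symm : N →ₗ[A] M ⧸ LinearMap.ker p), ?_⟩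
  ext x
  have he : e ((LinearMap.ker p).mkQ x) = p x := rfl
  simp only [LinearMap.comp_apply, LinearEquiv.coe_coe]
  rw [← he, LinearEquiv.symm_apply_apply]
  rfl

/-- Assume `r₁` and `r₂` are both surjective.  Let `σ` be an `A`-module
such that: (a) precomposition with `r₁` gives an isomorphism `Hom_A(W,σ) → Hom_A(L₁,σ)`;
and (b) `Hom_A(Ker r₁, σ) = 0` or `Hom_A(Ker r₂, σ) = 0`.  Then precomposition with the
projection `L → L₂`, `(x,y) ↦ y`, gives an isomorphism `Hom_A(L₂,σ) → Hom_A(L,σ)`. -/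
theorem statement3 {A : Type*} [Ring A] {L₁ L₂ W V : Type*}
    [AddCommGroup L₁] [AddCommGroup L₂] [AddCommGroup W] [AddCommGroup V]
    [Module A L₁] [Module A L₂] [Module A W] [Module A V]
    (r₁ : L₁ →ₗ[A] W) (r₂ : L₂ →ₗ[A] W)
    (h₁ : Function.Surjective r₁) (h₂ : Function.Surjective r₂)
    (ha : Function.Bijective fun ψ : W →ₗ[A] V => ψ.comp r₁)
    (hb : (∀ φ : ↥(LinearMap.ker r₁) →ₗ[A] V, φ = 0) ∨
          (∀ φ : ↥(LinearMap.ker r₂) →ₗ[A] V, φ = 0)) :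
    Function.Bijective fun ψ : L₂ →ₗ[A] V =>
      ψ.comp ((LinearMap.snd A L₁ L₂).comp (gluedModule r₁ r₂).subtype) := by
  set L := gluedModule r₁ r₂ with hL
  set p₂ : L →ₗ[A] L₂ := (LinearMap.snd A L₁ L₂).comp L.subtype with hp₂
  set p₁ : L →ₗ[A] L₁ := (LinearMap.fst A L₁ L₂).comp L.subtype with hp₁
  have hp₂surj : Function.Surjective p₂ := by
    intro y
    obtain ⟨x, hx⟩ := h₁ (r₂ y)
    exact ⟨⟨(x, y), hx⟩, rfl⟩
  have hp₁surj : Function.Surjective p₁ := by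
    intro x
    obtain ⟨y, hy⟩ := h₂ (r₁ x)
    exact ⟨⟨(x, y), hy.symm⟩, rfl⟩
  constructor
  · intro ψ ψ' hψ
    ext y
    obtain ⟨z, hz⟩ := hp₂surj y
    have := congrFun (congrArg (fun f => f.toFun) hψ) z
    simpa [hz] using this
  · intro φ
    rcases hb with hb | hb
    · -- φ vanishes on ker p₂ ≅ ker r₁
      have hker : LinearMap.ker p₂ ≤ LinearMap.ker φ := by
        intro z hz
        have hz2 : (z : L₁ × L₂).2 = 0 := hz
        have hz1 : (z : L₁ × L₂).1 ∈ LinearMap.ker r₁ := by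
          have := z.2
          simp only [SetLike.mem_coe, LinearMap.mem_ker]
          rw [show r₁ (z : L₁ × L₂).1 = r₂ (z : L₁ × L₂).2 from this, hz2, map_zero]
        -- inclusion ker r₁ → L
        let i : ↥(LinearMap.ker r₁) →ₗ[A] L :=
          { toFun := fun x => ⟨(x, 0), by simp [hL, gluedModule, x.2.out]⟩
            map_add' := by intro a b; ext <;> simp
            map_smul' := by intro c a; ext <;> simp }
        have : φ.comp i = 0 := hb _
        have h0 : φ (i ⟨(z : L₁ × L₂).1, hz1⟩) = 0 := by
          rw [show φ (i ⟨(z : L₁ × L₂).1, hz1⟩) = (φ.comp i) ⟨(z : L₁ × L₂).1, hz1⟩ from rfl,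
            this]
          rfl
        have hiz : i ⟨(z : L₁ × L₂).1, hz1⟩ = z := by
          apply Subtype.ext
          exact Prod.ext rfl hz2.symm
        rw [LinearMap.mem_ker, ← hiz]
        exact h0
      obtain ⟨ψ, hψ⟩ := factor_through_surjective p₂ hp₂surj φ hker
      exact ⟨ψ, hψ⟩
    · -- φ vanishes on ker p₁ ≅ ker r₂, factor through p₁, then through r₁
      have hker : LinearMap.ker p₁ ≤ LinearMap.ker φ := by
        intro z hz
        have hz1 : (z : L₁ × L₂).1 = 0 := hz
        have hz2 : (z : L₁ × L₂).2 ∈ LinearMap.ker r₂ := by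
          have := z.2
          simp only [SetLike.mem_coe, LinearMap.mem_ker]
          rw [show r₂ (z : L₁ × L₂).2 = r₁ (z : L₁ × L₂).1 from this.symm, hz1, map_zero]
        let i : ↥(LinearMap.ker r₂) →ₗ[A] L :=
          { toFun := fun y => ⟨(0, y), by simp [hL, gluedModule, y.2.out]⟩
            map_add' := by intro a b; ext <;> simp
            map_smul' := by intro c a; ext <;> simp }
        have : φ.comp i = 0 := hb _
        have h0 : φ (i ⟨(z : L₁ × L₂).2, hz2⟩) = 0 := by
          rw [show φ (i ⟨(z : L₁ × L₂).2, hz2⟩) = (φ.comp i) ⟨(z : L₁ × L₂).2, hz2⟩ from rfl,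
            this]
          rfl
        have hiz : i ⟨(z : L₁ × L₂).2, hz2⟩ = z := by
          apply Subtype.ext
          exact Prod.ext hz1.symm rfl
        rw [LinearMap.mem_ker, ← hiz]
        exact h0
      obtain ⟨χ, hχ⟩ := factor_through_surjective p₁ hp₁surj φ hker
      obtain ⟨ψW, hψW⟩ := ha.2 χ
      refine ⟨ψW.comp r₂, ?_⟩
      ext z
      have hz : r₁ (z : L₁ × L₂).1 = r₂ (z : L₁ × L₂).2 := z.2
      have h1 : χ (z : L₁ × L₂).1 = φ z := congrFun (congrArg (fun f => f.toFun) hχ) z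
      have h2 : ψW (r₁ (z : L₁ × L₂).1) = χ (z : L₁ × L₂).1 :=
        congrFun (congrArg (fun f => f.toFun) hψW) (z : L₁ × L₂).1
      show ψW (r₂ (z : L₁ × L₂).2) = φ z
      rw [← hz, h2, h1]
end

section
/- Let W be a finite-dimensional smooth representation of B(ℤ_p) over F with dim_F W ≥ 2. Assume the space of U(ℤ_p)-invariants W^{U(ℤ_p)} is one-dimensional and that T(ℤ_p) acts on it by the character χ. Then the space of U(ℤ_p)-invariants (Sym¹F² ⊗_F W)^{U(ℤ_p)} is two-dimensional and is isomorphic as a representation of T(ℤ_p) to the direct sum of the two characters χ·χ_{1,0} and χ·χ_{1,0}^s. -/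
open TensorProduct

section Setup

variable (p : ℕ) [Fact p.Prime]

/-- `K = GL₂(ℤ_p)`. -/
abbrev GL2 := Matrix.GeneralLinearGroup (Fin 2) ℤ_[p]

/-- `B(ℤ_p)`: the subgroup of upper triangular matrices in `GL₂(ℤ_p)`. -/
def Bsub : Subgroup (GL2 p) where
  carrier := {g | (g : Matrix (Fin 2) (Fin 2) ℤ_[p]) 1 0 = 0}
  one_mem' := by
    show ((1 : GL2 p) : Matrix (Fin 2) (Fin 2) ℤ_[p]) 1 0 = 0
    rw [Units.val_one]
    simp [Matrix.one_apply]
  mul_mem' := by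
    intro a b ha hb
    simp only [Set.mem_setOf_eq] at ha hb ⊢
    show ((a * b : GL2 p) : Matrix (Fin 2) (Fin 2) ℤ_[p]) 1 0 = 0
    rw [Units.val_mul, Matrix.mul_apply, Fin.sum_univ_two]
    simp [ha, hb]
  inv_mem' := by
    intro g hg
    simp only [Set.mem_setOf_eq] at hg ⊢
    show ((g⁻¹ : GL2 p) : Matrix (Fin 2) (Fin 2) ℤ_[p]) 1 0 = 0
    rw [Matrix.coe_units_inv, Matrix.inv_def]
    simp [Matrix.adjugate_fin_two, hg]

/-- `U(ℤ_p)`: the upper triangular unipotent subgroup, as a subgroup of `B(ℤ_p)`. -/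
def Usub : Subgroup ↥(Bsub p) where
  carrier := {g | ((g : GL2 p) : Matrix (Fin 2) (Fin 2) ℤ_[p]) 0 0 = 1 ∧
                  ((g : GL2 p) : Matrix (Fin 2) (Fin 2) ℤ_[p]) 1 1 = 1}
  one_mem' := by
    constructor <;>
    · show ((1 : GL2 p) : Matrix (Fin 2) (Fin 2) ℤ_[p]) _ _ = 1
      rw [Units.val_one]
      simp [Matrix.one_apply]
  mul_mem' := by
    intro a b ha hb
    simp only [Set.mem_setOf_eq] at ha hb ⊢
    have hb10 : ((b : GL2 p) : Matrix (Fin 2) (Fin 2) ℤ_[p]) 1 0 = 0 := b.2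
    have ha10 : ((a : GL2 p) : Matrix (Fin 2) (Fin 2) ℤ_[p]) 1 0 = 0 := a.2
    constructor <;>
    · show (((a * b : ↥(Bsub p)) : GL2 p) : Matrix (Fin 2) (Fin 2) ℤ_[p]) _ _ = 1
      rw [show ((a * b : ↥(Bsub p)) : GL2 p) = (a : GL2 p) * (b : GL2 p) from rfl]
      rw [Units.val_mul, Matrix.mul_apply, Fin.sum_univ_two]
      simp [ha.1, ha.2, hb.1, hb.2, hb10, ha10]
  inv_mem' := by
    intro g hg
    simp only [Set.mem_setOf_eq] at hg ⊢
    have hg10 : ((g : GL2 p) : Matrix (Fin 2) (Fin 2) ℤ_[p]) 1 0 = 0 := g.2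
    have hco : ((g⁻¹ : ↥(Bsub p)) : GL2 p) = (g : GL2 p)⁻¹ := rfl
    constructor <;>
    · show (((g⁻¹ : ↥(Bsub p)) : GL2 p) : Matrix (Fin 2) (Fin 2) ℤ_[p]) _ _ = 1
      rw [hco, Matrix.coe_units_inv, Matrix.inv_def]
      simp [Matrix.adjugate_fin_two, Matrix.det_fin_two, hg.1, hg.2, hg10]

/-- `T(ℤ_p)`: the diagonal torus, as a subgroup of `B(ℤ_p)`. -/
def Tsub : Subgroup ↥(Bsub p) where
  carrier := {g | ((g : GL2 p) : Matrix (Fin 2) (Fin 2) ℤ_[p]) 0 1 = 0}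
  one_mem' := by
    show ((1 : GL2 p) : Matrix (Fin 2) (Fin 2) ℤ_[p]) 0 1 = 0
    rw [Units.val_one]
    simp [Matrix.one_apply]
  mul_mem' := by
    intro a b ha hb
    simp only [Set.mem_setOf_eq] at ha hb ⊢
    show (((a * b : ↥(Bsub p)) : GL2 p) : Matrix (Fin 2) (Fin 2) ℤ_[p]) 0 1 = 0
    rw [show ((a * b : ↥(Bsub p)) : GL2 p) = (a : GL2 p) * (b : GL2 p) from rfl]
    rw [Units.val_mul, Matrix.mul_apply, Fin.sum_univ_two]
    simp [ha, hb]
  inv_mem' := by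
    intro g hg
    simp only [Set.mem_setOf_eq] at hg ⊢
    show (((g⁻¹ : ↥(Bsub p)) : GL2 p) : Matrix (Fin 2) (Fin 2) ℤ_[p]) 0 1 = 0
    rw [show ((g⁻¹ : ↥(Bsub p)) : GL2 p) = (g : GL2 p)⁻¹ from rfl,
      Matrix.coe_units_inv, Matrix.inv_def]
    simp [Matrix.adjugate_fin_two, hg]

variable (F : Type*) [Field F] [CharP F p]

/-- The reduction map `ℤ_p → 𝔽_p ⊆ F` ("bar"). -/
noncomputable def red : ℤ_[p] →+* F :=
  (ZMod.castHom dvd_rfl F).comp PadicInt.toZMod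

/-- `Sym¹F²`: the representation of `K = GL₂(ℤ_p)` on `F² = FX ⊕ FY` obtained by
reducing the matrix entries modulo `p` (`X`, `Y` being the standard basis vectors). -/
noncomputable def sym1Rep : Representation F (GL2 p) (Fin 2 → F) where
  toFun g := Matrix.toLin' ((g : Matrix (Fin 2) (Fin 2) ℤ_[p]).map (red p F))
  map_one' := by
    show Matrix.toLin' (((1 : GL2 p) :
        Matrix (Fin 2) (Fin 2) ℤ_[p]).map (red p F)) = 1
    rw [Units.val_one, Matrix.map_one _ (map_zero _) (map_one _), Matrix.toLin'_one]
    rfl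
  map_mul' := by
    intro g h
    show Matrix.toLin' (((g * h : GL2 p) :
        Matrix (Fin 2) (Fin 2) ℤ_[p]).map (red p F)) = _
    rw [Units.val_mul, Matrix.map_mul, Matrix.toLin'_mul]
    rfl

/-- The `(i,j)`-entry of an element of `T(ℤ_p)` (or `B(ℤ_p)`). -/
def tentry (t : ↥(Tsub p)) (i j : Fin 2) : ℤ_[p] :=
  (((t : ↥(Bsub p)) : GL2 p) : Matrix (Fin 2) (Fin 2) ℤ_[p]) i j

end Setup

/-- The `B(ℤ_p)`-representation `Sym¹F² ⊗_F W`. -/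
noncomputable def symTensor (p : ℕ) [Fact p.Prime] (F : Type*) [Field F] [CharP F p]
    {W : Type*} [AddCommGroup W] [Module F W] (ρ : Representation F ↥(Bsub p) W) :
    Representation F ↥(Bsub p) ((Fin 2 → F) ⊗[F] W) :=
  Representation.tprod ((sym1Rep p F).comp (Bsub p).subtype) ρ

/-!
Let `w₀` span `W^U` and `N = u(1) - 1`, where `u(x) = (1 x; 0 1)`. Smoothness makes `U ≅ ℤ_p` act
through some `ℤ/p^n`, generated by `u(1)`; so `N` is nilpotent with kernel `F w₀`, hence
`w₀ = N(-v)` for some `v`, and then `u(x) v = v - x̄ w₀` for all `x`.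
An element `X ⊗ a + Y ⊗ b` of `Sym¹F² ⊗ W` is `U`-invariant exactly when `u(x) a = a - x̄ b` for
all `x`; this forces `b ∈ F w₀`, and the invariants have basis `X ⊗ w₀`, `X ⊗ v + Y ⊗ w₀`.
The torus acts on `v` modulo `F w₀` by a character that differs from `χ` since `p ≠ 2`, so `v`
can be taken to be a torus eigenvector; the two basis vectors then have the characters
`χ χ_{1,0}` and `χ χ_{1,0}^s`.
-/

section LinearAlgebra

variable {K V : Type*} [Field K] [AddCommGroup V] [Module K V]

lemma Module.End.exists_ne_zero_mem_range_of_isNilpotent {N : Module.End K V}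
    (hN : IsNilpotent N) (hN0 : N ≠ 0) : ∃ y ∈ LinearMap.range N, N y = 0 ∧ y ≠ 0 := by
  have := nontrivial_of_ne N 0 hN0
  obtain ⟨k, hk⟩ : ∃ k, nilpotencyClass N = k + 2 := by
    have h0 := pos_nilpotencyClass_iff.mpr hN
    have h1 : nilpotencyClass N ≠ 1 := nilpotencyClass_eq_one.not.mpr hN0
    exact ⟨nilpotencyClass N - 2, by omega⟩
  obtain ⟨hvanish, hne⟩ := nilpotencyClass_eq_succ_iff.mp hk
  obtain ⟨z, hz⟩ : ∃ z, (N ^ (k + 1)) z ≠ 0 := by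
    by_contra! h
    exact hne (LinearMap.ext h)
  refine ⟨(N ^ (k + 1)) z, ⟨(N ^ k) z, ?_⟩, ?_, hz⟩
  · rw [pow_succ', Module.End.mul_apply]
  · rw [← Module.End.mul_apply, ← pow_succ', hvanish, LinearMap.zero_apply]

lemma Module.End.mem_range_of_isNilpotent_of_ker_eq_span {N : Module.End K V}
    (hN : IsNilpotent N) (hN0 : N ≠ 0) {w : V} (hker : LinearMap.ker N = K ∙ w) :
    w ∈ LinearMap.range N := by
  obtain ⟨y, hy, hNy, hy0⟩ := exists_ne_zero_mem_range_of_isNilpotent hN hN0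
  obtain ⟨c, rfl⟩ := Submodule.mem_span_singleton.mp (hker ▸ LinearMap.mem_ker.mpr hNy)
  have hc : c ≠ 0 := by rintro rfl; simp at hy0
  simpa [smul_smul, inv_mul_cancel₀ hc] using Submodule.smul_mem _ c⁻¹ hy

/-- The correction is read off at `t₀`; commutativity of the `A t` makes it work for all `t`. -/
lemma Module.End.exists_common_eigenvector {ι : Type*} (A : ι → Module.End K V)
    (hA : ∀ s t, Commute (A s) (A t)) {v w : V} (hw : w ≠ 0) {χ μ : ι → K}
    (hAw : ∀ t, A t w = χ t • w) (hAv : ∀ t, A t v - μ t • v ∈ K ∙ w) {t₀ : ι}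
    (ht₀ : μ t₀ ≠ χ t₀) : ∃ c : K, ∀ t, A t (v + c • w) = μ t • (v + c • w) := by
  choose ν hν using fun t => Submodule.mem_span_singleton.mp (hAv t)
  have hAv' : ∀ t, A t v = μ t • v + ν t • w := fun t => by rw [hν]; abel
  have hrel : ∀ t, ν t * (μ t₀ - χ t₀) = ν t₀ * (μ t - χ t) := by
    intro t
    have h := congrArg (· v) (hA t t₀).eq
    simp only [Module.End.mul_apply, hAv', map_add, map_smul, hAw] at h
    have h' : (ν t * (μ t₀ - χ t₀) - ν t₀ * (μ t - χ t)) • w = 0 := by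
      linear_combination (norm := module) h
    exact sub_eq_zero.mp ((smul_eq_zero.mp h').resolve_right hw)
  refine ⟨ν t₀ / (μ t₀ - χ t₀), fun t => ?_⟩
  have hne : μ t₀ - χ t₀ ≠ 0 := sub_ne_zero.mpr ht₀
  have hν' : ν t = ν t₀ / (μ t₀ - χ t₀) * (μ t - χ t) := by
    field_simp; linear_combination hrel t
  rw [map_add, map_smul, hAv', hAw, hν']
  module

lemma finrank_span_pair {x y : V} (h : LinearIndependent K ![x, y]) :
    Module.finrank K (Submodule.span K {x, y}) = 2 := by
  rw [← Matrix.range_cons_cons_empty x y ![], finrank_span_eq_card h, Fintype.card_fin]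

end LinearAlgebra

namespace BorelRep

section Unipotent

variable (p : ℕ) [Fact p.Prime]

noncomputable def unipotent (x : ℤ_[p]) : Bsub p :=
  ⟨⟨!![1, x; 0, 1], !![1, -x; 0, 1], by simp [Matrix.one_fin_two], by simp [Matrix.one_fin_two]⟩,
    by simp [Bsub]⟩

@[simp] lemma coe_unipotent (x : ℤ_[p]) :
    ((unipotent p x : Bsub p) : GL2 p).val = !![1, x; 0, 1] := rfl

lemma unipotent_add (x y : ℤ_[p]) : unipotent p (x + y) = unipotent p x * unipotent p y := by
  ext i j; fin_cases i <;> fin_cases j <;> simp [Matrix.mul_apply, add_comm]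

lemma unipotent_zero : unipotent p 0 = 1 := by
  ext i j; fin_cases i <;> fin_cases j <;> simp

lemma unipotent_natCast (k : ℕ) : unipotent p k = unipotent p 1 ^ k := by
  induction k with
  | zero => simp [unipotent_zero]
  | succ k ih => rw [Nat.cast_succ, unipotent_add, ih, pow_succ]

lemma unipotent_mem_Usub (x : ℤ_[p]) : unipotent p x ∈ Usub p := by
  simp [Usub]

lemma eq_unipotent_of_mem_Usub (g : Usub p) :
    (g : Bsub p) = unipotent p ((g : GL2 p).val 0 1) := by
  have h00 : (g : GL2 p).val 0 0 = 1 := g.2.1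
  have h11 : (g : GL2 p).val 1 1 = 1 := g.2.2
  have h10 : (g : GL2 p).val 1 0 = 0 := (g : Bsub p).2
  ext i j; fin_cases i <;> fin_cases j <;> simp [h00, h11, h10]

lemma continuous_unipotent : Continuous (unipotent p) := by
  refine Continuous.subtype_mk (Units.continuous_iff.mpr ⟨?_, ?_⟩) _ <;>
    refine continuous_matrix fun i j => ?_ <;> fin_cases i <;> fin_cases j <;> simp <;> fun_prop

lemma mem_invariants_Usub_iff {F V : Type*} [Field F] [AddCommGroup V] [Module F V]
    (σ : Representation F (Bsub p) V) (v : V) :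
    v ∈ Representation.invariants (σ.comp (Usub p).subtype) ↔
      ∀ x, σ (unipotent p x) v = v := by
  refine ⟨fun hv x => hv ⟨_, unipotent_mem_Usub p x⟩, fun hv g => ?_⟩
  simpa [← eq_unipotent_of_mem_Usub] using hv ((g : GL2 p).val 0 1)

end Unipotent

section Torus

variable {p : ℕ} [Fact p.Prime]

lemma coe_torus (t : Tsub p) :
    ((t : Bsub p) : GL2 p).val = !![tentry p t 0 0, 0; 0, tentry p t 1 1] := by
  have h01 : ((t : Bsub p) : GL2 p).val 0 1 = 0 := t.2
  have h10 : ((t : Bsub p) : GL2 p).val 1 0 = 0 := (t : Bsub p).2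
  ext i j; fin_cases i <;> fin_cases j <;> simp [tentry, h01, h10]

lemma isUnit_tentry (t : Tsub p) : IsUnit (tentry p t 0 0) ∧ IsUnit (tentry p t 1 1) := by
  have h := ((t : Bsub p) : GL2 p).isUnit
  rw [Matrix.isUnit_iff_isUnit_det, coe_torus, Matrix.det_fin_two_of] at h
  exact IsUnit.mul_iff.mp (by simpa using h)

lemma torus_commute (s t : Tsub p) : Commute (s : Bsub p) (t : Bsub p) := by
  ext i j
  simp only [Subgroup.coe_mul, Units.val_mul, coe_torus]
  fin_cases i <;> fin_cases j <;> simp [mul_comm]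

lemma unipotent_mul_torus (t : Tsub p) {x y : ℤ_[p]}
    (h : tentry p t 0 0 * y = x * tentry p t 1 1) :
    unipotent p x * t = t * unipotent p y := by
  ext i j
  simp only [Subgroup.coe_mul, Units.val_mul, coe_torus, coe_unipotent]
  fin_cases i <;> fin_cases j <;> simp [h]

lemma exists_torus_red_ne (F : Type*) [Field F] [CharP F p] (hp : p ≠ 2) :
    ∃ t : Tsub p, red p F (tentry p t 0 0) ≠ red p F (tentry p t 1 1) := by
  let g : GL2 p := ⟨!![1, 0; 0, -1], !![1, 0; 0, -1], by simp [Matrix.one_fin_two],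
    by simp [Matrix.one_fin_two]⟩
  refine ⟨⟨⟨g, by simp [Bsub, g]⟩, by simp [Tsub, g]⟩, ?_⟩
  simpa [tentry, g] using (Ring.neg_one_ne_one_of_char_ne_two (by rwa [ringChar.eq F p])).symm

end Torus

section Smooth

variable {p : ℕ} [Fact p.Prime]

lemma exists_pow_mul_mem_of_mem_nhds {S : Set ℤ_[p]} (hS : S ∈ nhds 0) :
    ∃ n : ℕ, ∀ y : ℤ_[p], (p : ℤ_[p]) ^ n * y ∈ S := by
  obtain ⟨ε, hε, hball⟩ := Metric.mem_nhds_iff.mp hS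
  have hp : ‖(p : ℤ_[p])‖ < 1 := PadicInt.norm_natCast_lt_one_iff.mpr dvd_rfl
  obtain ⟨n, hn⟩ := ((tendsto_pow_atTop_nhds_zero_of_norm_lt_one hp).eventually
    (Metric.ball_mem_nhds 0 hε)).exists
  refine ⟨n, fun y => hball ?_⟩
  rw [dist_zero_right] at hn
  rw [Metric.mem_ball, dist_zero_right]
  calc ‖(p : ℤ_[p]) ^ n * y‖ ≤ ‖(p : ℤ_[p]) ^ n‖ := by
        rw [norm_mul]; exact mul_le_of_le_one_right (norm_nonneg _) (PadicInt.norm_le_one y)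
    _ < ε := hn

variable {F W : Type*} [Field F] [AddCommGroup W] [Module F W] {ρ : Representation F (Bsub p) W}

lemma exists_unipotent_pow_mul_eq_one [FiniteDimensional F W]
    (hsmooth : ∀ w : W, IsOpen {b : Bsub p | ρ b w = w}) :
    ∃ n : ℕ, ∀ y : ℤ_[p], ρ (unipotent p ((p : ℤ_[p]) ^ n * y)) = 1 := by
  let b := Module.finBasis F W
  have hopen : IsOpen {x : ℤ_[p] | ∀ i, ρ (unipotent p x) (b i) = b i} := by
    simp only [Set.ofPred_forall]
    exact isOpen_iInter_of_finite fun i => (hsmooth (b i)).preimage (continuous_unipotent p)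
  obtain ⟨n, hn⟩ := exists_pow_mul_mem_of_mem_nhds (hopen.mem_nhds (by simp [unipotent_zero]))
  exact ⟨n, fun y => b.ext fun i => hn y i⟩

variable [CharP F p]

lemma red_natCast_self : red p F p = 0 := by
  rw [map_natCast, CharP.cast_eq_zero]

/-- Smoothness makes `U(ℤ_p)` act through a finite quotient `ℤ/p^n`, on which the action is
generated by `u(1)`. -/
lemma exists_unipotent_eq_pow [FiniteDimensional F W]
    (hsmooth : ∀ w : W, IsOpen {b : Bsub p | ρ b w = w}) (x : ℤ_[p]) :
    ∃ k : ℕ, ρ (unipotent p x) = ρ (unipotent p 1) ^ k ∧ red p F x = k := by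
  obtain ⟨n, hn⟩ := exists_unipotent_pow_mul_eq_one hsmooth
  obtain ⟨y, hy⟩ := Ideal.mem_span_singleton'.mp (PadicInt.appr_spec (n + 1) x)
  set k := PadicInt.appr x (n + 1)
  have hx : x = k + (p : ℤ_[p]) ^ n * (p * y) := by
    linear_combination -hy
  refine ⟨k, ?_, ?_⟩
  · rw [hx, unipotent_add, map_mul, hn, mul_one, unipotent_natCast, map_pow]
  · rw [hx, map_add, map_natCast, map_mul, map_mul, red_natCast_self, zero_mul, mul_zero,
      add_zero]

lemma isNilpotent_unipotent_one_sub_one [FiniteDimensional F W]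
    (hsmooth : ∀ w : W, IsOpen {b : Bsub p | ρ b w = w}) :
    IsNilpotent (ρ (unipotent p 1) - 1) := by
  nontriviality W
  have := charP_of_injective_algebraMap' F (A := Module.End F W) p
  obtain ⟨n, hn⟩ := exists_unipotent_pow_mul_eq_one hsmooth
  refine ⟨p ^ n, ?_⟩
  rw [sub_pow_char_pow_of_commute p n (Commute.one_right _), one_pow, ← map_pow,
    ← unipotent_natCast, Nat.cast_pow, ← mul_one ((p : ℤ_[p]) ^ n), hn, sub_self]

end Smooth

section Shifts

variable {p : ℕ} [Fact p.Prime] {F W : Type*} [Field F] [CharP F p] [AddCommGroup W]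
  [Module F W] {ρ : Representation F (Bsub p) W}

variable (ρ) in
/-- Under `tensorProdEquiv` these pairs are exactly the `U(ℤ_p)`-invariants of `Sym¹F² ⊗ W`. -/
def unipotentShifts : Submodule F (W × W) where
  carrier := {q | ∀ x, ρ (unipotent p x) q.1 = q.1 - red p F x • q.2}
  add_mem' {q r} hq hr x := by
    simp only [Prod.fst_add, Prod.snd_add, map_add, hq x, hr x, smul_add]; abel
  zero_mem' x := by simp
  smul_mem' c q hq x := by
    simp only [Prod.smul_fst, Prod.smul_snd, map_smul, hq x, smul_sub, smul_comm c]

lemma mem_unipotentShifts_iff {q : W × W} :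
    q ∈ unipotentShifts ρ ↔ ∀ x, ρ (unipotent p x) q.1 = q.1 - red p F x • q.2 := Iff.rfl

lemma mk_zero_mem_unipotentShifts_iff {v : W} :
    (v, 0) ∈ unipotentShifts ρ ↔ v ∈ Representation.invariants (ρ.comp (Usub p).subtype) := by
  rw [mem_invariants_Usub_iff]
  simp [mem_unipotentShifts_iff]

/-- Comparing `u(x + 1) • v` computed in two ways shows that `w` is `U(ℤ_p)`-invariant. -/
lemma snd_mem_invariants_of_mem_unipotentShifts {q : W × W} (hq : q ∈ unipotentShifts ρ) :
    q.2 ∈ Representation.invariants (ρ.comp (Usub p).subtype) := by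
  rw [mem_invariants_Usub_iff]
  intro x
  have h := hq (x + 1)
  rw [unipotent_add, map_mul, Module.End.mul_apply, hq 1, map_sub, hq x, map_smul] at h
  simp only [map_add, map_one, add_smul, one_smul] at h
  linear_combination (norm := module) -h

lemma mk_mem_unipotentShifts_of_unipotent_one [FiniteDimensional F W]
    (hsmooth : ∀ w : W, IsOpen {b : Bsub p | ρ b w = w}) {v w : W}
    (hw : ρ (unipotent p 1) w = w) (hv : ρ (unipotent p 1) v = v - w) :
    (v, w) ∈ unipotentShifts ρ := by
  have hpow (k : ℕ) : (ρ (unipotent p 1) ^ k) v = v - (k : F) • w := by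
    induction k with
    | zero => simp
    | succ k ih =>
      rw [pow_succ', Module.End.mul_apply, ih, map_sub, hv, map_smul, hw, Nat.cast_succ,
        add_smul, one_smul]
      abel
  intro x
  obtain ⟨k, hρ, hred⟩ := exists_unipotent_eq_pow hsmooth x
  rw [hρ, hred, hpow]

lemma exists_mk_mem_unipotentShifts [FiniteDimensional F W]
    (hsmooth : ∀ w : W, IsOpen {b : Bsub p | ρ b w = w}) {w₀ : W}
    (hI : Representation.invariants (ρ.comp (Usub p).subtype) = F ∙ w₀)
    (hI_ne_top : Representation.invariants (ρ.comp (Usub p).subtype) ≠ ⊤) :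
    ∃ v, (v, w₀) ∈ unipotentShifts ρ := by
  set N := ρ (unipotent p 1) - 1
  have hker : LinearMap.ker N = F ∙ w₀ := by
    ext z
    rw [← hI, ← mk_zero_mem_unipotentShifts_iff]
    refine ⟨fun hz => mk_mem_unipotentShifts_of_unipotent_one hsmooth (by simp)
      (by simpa [N, sub_eq_zero] using hz), fun hz => ?_⟩
    simpa [N, sub_eq_zero] using hz 1
  have hN0 : N ≠ 0 := by
    rintro h
    rw [h, LinearMap.ker_zero, ← hI] at hker
    exact hI_ne_top hker.symm
  obtain ⟨v, hv⟩ := Module.End.mem_range_of_isNilpotent_of_ker_eq_span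
    (isNilpotent_unipotent_one_sub_one hsmooth) hN0 hker
  have hw₀ : ρ (unipotent p 1) w₀ = w₀ := by
    have : w₀ ∈ LinearMap.ker N := hker ▸ Submodule.mem_span_singleton_self w₀
    simpa [N, sub_eq_zero] using this
  refine ⟨-v, mk_mem_unipotentShifts_of_unipotent_one hsmooth hw₀ ?_⟩
  have : ρ (unipotent p 1) v - v = w₀ := hv
  rw [map_neg, ← this]; abel

lemma torus_mem_unipotentShifts (t : Tsub p) {q : W × W} (hq : q ∈ unipotentShifts ρ) :
    (ρ t q.1, ((red p F (tentry p t 0 0))⁻¹ * red p F (tentry p t 1 1)) • ρ t q.2) ∈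
      unipotentShifts ρ := by
  intro x
  have ha := (isUnit_tentry t).1
  set y := ↑ha.unit⁻¹ * (x * tentry p t 1 1)
  have hcomm : unipotent p x * t = t * unipotent p y :=
    unipotent_mul_torus t (by rw [← mul_assoc, ha.mul_val_inv, one_mul])
  have hy : red p F y = red p F x * ((red p F (tentry p t 0 0))⁻¹ * red p F (tentry p t 1 1)) := by
    rw [map_mul, map_units_inv, ha.unit_spec, map_mul]; ring
  dsimp only
  rw [← Module.End.mul_apply, ← map_mul, hcomm, map_mul, Module.End.mul_apply, hq y, map_sub,
    map_smul, hy, smul_smul]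

/-- Modulo `F w₀` the torus acts on `v` by `χ · χ_{1,0}⁻¹ · χ_{1,0}^s`, a character different
from `χ` because `p ≠ 2`; this lets `v` be corrected to an eigenvector. -/
lemma exists_torus_eigenvector_mk_mem_unipotentShifts (hp : p ≠ 2) {w₀ v : W} (hw₀ : w₀ ≠ 0)
    (hI : Representation.invariants (ρ.comp (Usub p).subtype) = F ∙ w₀)
    (χ : Tsub p →* Fˣ) (hχ : ∀ t : Tsub p, ρ t w₀ = (χ t : F) • w₀)
    (hv : (v, w₀) ∈ unipotentShifts ρ) :
    ∃ v' : W, (v', w₀) ∈ unipotentShifts ρ ∧ ∀ t : Tsub p,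
      ρ t v' = ((χ t : F) * ((red p F (tentry p t 0 0))⁻¹ * red p F (tentry p t 1 1))) • v' := by
  set μ : Tsub p → F := fun t =>
    (χ t : F) * ((red p F (tentry p t 0 0))⁻¹ * red p F (tentry p t 1 1))
  have hmod (t : Tsub p) : ρ t v - μ t • v ∈ F ∙ w₀ := by
    rw [← hI, ← mk_zero_mem_unipotentShifts_iff]
    have h := sub_mem (torus_mem_unipotentShifts t hv) (Submodule.smul_mem _ (μ t) hv)
    simpa [hχ, μ, smul_smul, mul_comm] using h
  obtain ⟨t₀, ht₀⟩ := exists_torus_red_ne F hp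
  have hμ : μ t₀ ≠ χ t₀ := by
    have ha : red p F (tentry p t₀ 0 0) ≠ 0 := ((isUnit_tentry t₀).1.map (red p F)).ne_zero
    simpa [μ, mul_eq_left₀, (χ t₀).ne_zero, inv_mul_eq_one₀ ha] using ht₀
  obtain ⟨c, hc⟩ := Module.End.exists_common_eigenvector (fun t : Tsub p => ρ t)
    (fun s t => (torus_commute s t).map ρ) hw₀ hχ hmod hμ
  have hw₀I : (w₀, (0 : W)) ∈ unipotentShifts ρ :=
    mk_zero_mem_unipotentShifts_iff.mpr (hI ▸ Submodule.mem_span_singleton_self w₀)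
  refine ⟨v + c • w₀, ?_, hc⟩
  simpa using add_mem hv (Submodule.smul_mem _ c hw₀I)

lemma unipotentShifts_eq_span {w₀ v : W}
    (hI : Representation.invariants (ρ.comp (Usub p).subtype) = F ∙ w₀)
    (hv : (v, w₀) ∈ unipotentShifts ρ) :
    unipotentShifts ρ = Submodule.span F {(w₀, 0), (v, w₀)} := by
  have hw₀I : (w₀, (0 : W)) ∈ unipotentShifts ρ :=
    mk_zero_mem_unipotentShifts_iff.mpr (hI ▸ Submodule.mem_span_singleton_self w₀)
  refine le_antisymm (fun q hq => ?_) (Submodule.span_le.mpr (Set.insert_subset hw₀I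
    (Set.singleton_subset_iff.mpr hv)))
  obtain ⟨c, hc⟩ := Submodule.mem_span_singleton.mp
    (hI ▸ snd_mem_invariants_of_mem_unipotentShifts hq)
  have hq' : (q.1 - c • v, 0) ∈ unipotentShifts ρ := by
    convert sub_mem hq (Submodule.smul_mem _ c hv) using 1
    ext <;> simp [hc]
  obtain ⟨c', hc'⟩ := Submodule.mem_span_singleton.mp (hI ▸ mk_zero_mem_unipotentShifts_iff.mp hq')
  refine Submodule.mem_span_pair.mpr ⟨c', c, ?_⟩
  ext
  · simp [hc']
  · simp [hc]

end Shifts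

section Tensor

variable {F W : Type*} [Field F] [AddCommGroup W] [Module F W]

noncomputable def tensorProdEquiv : (Fin 2 → F) ⊗[F] W ≃ₗ[F] W × W :=
  TensorProduct.comm F (Fin 2 → F) W ≪≫ₗ piScalarRight F F W (Fin 2) ≪≫ₗ
    LinearEquiv.piFinTwo F (fun _ => W)

@[simp] lemma tensorProdEquiv_tmul (f : Fin 2 → F) (w : W) :
    tensorProdEquiv (f ⊗ₜ[F] w) = (f 0 • w, f 1 • w) := by
  simp [tensorProdEquiv]

lemma tensorProdEquiv_symm_apply (a b : W) :
    tensorProdEquiv.symm (a, b) = Pi.single 0 1 ⊗ₜ[F] a + Pi.single 1 1 ⊗ₜ[F] b := by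
  rw [LinearEquiv.symm_apply_eq]
  simp

variable {p : ℕ} [Fact p.Prime] [CharP F p]

lemma sym1Rep_apply_single (g : GL2 p) (j : Fin 2) :
    sym1Rep p F g (Pi.single j 1) = fun i => red p F (g.val i j) := by
  funext i
  simp [sym1Rep, Matrix.toLin'_apply, Matrix.mulVec_single]

lemma tensorProdEquiv_symTensor_apply (ρ : Representation F (Bsub p) W) (g : Bsub p) (a b : W) :
    tensorProdEquiv (symTensor p F ρ g (tensorProdEquiv.symm (a, b))) =
      (red p F ((g : GL2 p).val 0 0) • ρ g a + red p F ((g : GL2 p).val 0 1) • ρ g b,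
        red p F ((g : GL2 p).val 1 1) • ρ g b) := by
  have h10 : (g : GL2 p).val 1 0 = 0 := g.2
  simp [tensorProdEquiv_symm_apply, symTensor, Representation.tprod_apply, sym1Rep_apply_single,
    h10]

lemma invariants_symTensor_eq_comap (ρ : Representation F (Bsub p) W) :
    Representation.invariants ((symTensor p F ρ).comp (Usub p).subtype) =
      (unipotentShifts ρ).comap (tensorProdEquiv (F := F) (W := W)).toLinearMap := by
  ext z
  obtain ⟨⟨a, b⟩, rfl⟩ := tensorProdEquiv.symm.surjective z
  rw [mem_invariants_Usub_iff, Submodule.mem_comap]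
  simp only [LinearEquiv.coe_coe, LinearEquiv.apply_symm_apply, mem_unipotentShifts_iff,
    LinearEquiv.eq_symm_apply, tensorProdEquiv_symTensor_apply, coe_unipotent, Matrix.of_apply,
    Matrix.cons_val_zero, Matrix.cons_val_one, Matrix.cons_val', map_one,
    one_smul, Prod.mk.injEq]
  refine ⟨fun h x => ?_, fun h x => ?_⟩
  · obtain ⟨h1, h2⟩ := h x
    rw [h2] at h1
    exact eq_sub_of_add_eq h1
  · have hb := (mem_invariants_Usub_iff p ρ b).mp
      (snd_mem_invariants_of_mem_unipotentShifts (q := (a, b)) h) x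
    rw [h x, hb, sub_add_cancel]
    exact ⟨rfl, rfl⟩

end Tensor

end BorelRep

open BorelRep

theorem statement4 (p : ℕ) [Fact p.Prime] (hp : 5 ≤ p)
    (F : Type*) [Field F] [CharP F p]
    {W : Type*} [AddCommGroup W] [Module F W]
    (ρ : Representation F ↥(Bsub p) W)
    (hsmooth : ∀ w : W, IsOpen {b : ↥(Bsub p) | ρ b w = w})
    [FiniteDimensional F W] (hdim : 2 ≤ Module.finrank F W)
    (hinv1 : Module.finrank F
      ↥(Representation.invariants (ρ.comp (Usub p).subtype)) = 1)
    (χ : ↥(Tsub p) →* Fˣ)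
    (hχ : ∀ t : ↥(Tsub p),
      ∀ w ∈ Representation.invariants (ρ.comp (Usub p).subtype),
      ρ (t : ↥(Bsub p)) w = (χ t : F) • w) :
    Module.finrank F
      ↥(Representation.invariants ((symTensor p F ρ).comp (Usub p).subtype)) = 2 ∧
    ∃ v₁ v₂ : (Fin 2 → F) ⊗[F] W,
      v₁ ∈ Representation.invariants ((symTensor p F ρ).comp (Usub p).subtype) ∧
      v₂ ∈ Representation.invariants ((symTensor p F ρ).comp (Usub p).subtype) ∧
      v₁ ≠ 0 ∧ v₂ ≠ 0 ∧
      Representation.invariants ((symTensor p F ρ).comp (Usub p).subtype) =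
        Submodule.span F {v₁, v₂} ∧
      (∀ t : ↥(Tsub p),
        symTensor p F ρ (t : ↥(Bsub p)) v₁ =
          ((χ t : F) * red p F (tentry p t 0 0)) • v₁) ∧
      (∀ t : ↥(Tsub p),
        symTensor p F ρ (t : ↥(Bsub p)) v₂ =
          ((χ t : F) * red p F (tentry p t 1 1)) • v₂) := by
  set I := Representation.invariants (ρ.comp (Usub p).subtype)
  obtain ⟨w₀, hw₀I, hw₀⟩ := Submodule.exists_mem_ne_zero_of_ne_bot fun h : I = ⊥ => by
    rw [h, finrank_bot] at hinv1; omega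
  have hI : I = F ∙ w₀ := eq_span_singleton_of_mem_of_finrank_eq_one hinv1 hw₀I hw₀
  have hI_ne_top : I ≠ ⊤ := fun h => by
    rw [h, finrank_top] at hinv1; omega
  obtain ⟨v, hv⟩ := exists_mk_mem_unipotentShifts hsmooth hI hI_ne_top
  obtain ⟨v', hv', hv'T⟩ := exists_torus_eigenvector_mk_mem_unipotentShifts (by omega) hw₀ hI χ
    (fun t => hχ t w₀ hw₀I) hv
  let e : (Fin 2 → F) ⊗[F] W ≃ₗ[F] W × W := tensorProdEquiv
  have hJ : Representation.invariants ((symTensor p F ρ).comp (Usub p).subtype) =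
      Submodule.span F {e.symm (w₀, 0), e.symm (v', w₀)} := by
    rw [invariants_symTensor_eq_comap, unipotentShifts_eq_span hI hv',
      Submodule.comap_equiv_eq_map_symm, Submodule.map_span, Set.image_pair]
    rfl
  have hind : LinearIndependent F ![e.symm (w₀, 0), e.symm (v', w₀)] := by
    rw [LinearIndependent.pair_iff' (by simpa using hw₀)]
    intro a h
    exact hw₀ (by simpa [← map_smul] using (congrArg (Prod.snd ∘ e) h).symm)
  refine ⟨hJ ▸ finrank_span_pair hind, _, _, hJ ▸ Submodule.subset_span (by simp),
    hJ ▸ Submodule.subset_span (by simp), hind.ne_zero 0, hind.ne_zero 1, hJ,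
    fun t => e.injective ?_, fun t => e.injective ?_⟩
  · simp [e, tensorProdEquiv_symTensor_apply, coe_torus, hχ t w₀ hw₀I, smul_smul, mul_comm]
  · have ha : red p F (tentry p t 0 0) ≠ 0 := ((isUnit_tentry t).1.map (red p F)).ne_zero
    simp [e, tensorProdEquiv_symTensor_apply, coe_torus, hχ t w₀ hw₀I, hv'T, smul_smul, mul_comm]
    congr 1
    field_simp
end

section
/- Let G be a group, F a field, and σ a nonzero F[G]-module that is finite-dimensional over F and satisfies End_{F[G]}(σ) = F (every F[G]-module endomorphism of σ is multiplication by a scalar). Let M be an F[G]-module such that the natural evaluation map σ ⊗_F Hom_{F[G]}(σ, M) → M, s ⊗ φ ↦ φ(s), is an isomorphism (i.e., M is σ-typic). If M' ⊆ M is an F[G]-submodule which is a direct summand of M (there exists an F[G]-submodule M'' with M = M' ⊕ M''), then the evaluation map σ ⊗_F Hom_{F[G]}(σ, M') → M' is also an isomorphism; in particular M' is σ-typic. -/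
/-!
The evaluation map `σ ⊗ Hom_G(σ, M) → M` is natural in `M`. An invariant direct summand `M'`
is a `G`-equivariant retract of `M` (inclusion and projection along an invariant complement),
so the evaluation map of `M'` is a retract, in the arrow category, of the evaluation map of `M`;
a retract of a bijection is a bijection.
-/

open TensorProduct

/-- The `F`-submodule of `F[G]`-module homomorphisms (equivariant `F`-linear maps)
between two representations. -/
def equivHom {F : Type*} [Field F] {G : Type*} [Group G]
    {S M : Type*} [AddCommGroup S] [Module F S] [AddCommGroup M] [Module F M]
    (ρ : Representation F G S) (τ : Representation F G M) :
    Submodule F (S →ₗ[F] M) where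
  carrier := {φ | ∀ (g : G) (s : S), φ (ρ g s) = τ g (φ s)}
  add_mem' := by
    intro φ ψ hφ hψ g s
    simp [hφ g s, hψ g s]
  zero_mem' := by intro g s; simp
  smul_mem' := by
    intro c φ hφ g s
    simp [hφ g s]

/-- The evaluation map `σ ⊗_F Hom_{F[G]}(σ, M) → M`, `s ⊗ φ ↦ φ(s)`. -/
noncomputable def evalMap {F : Type*} [Field F] {G : Type*} [Group G]
    {S M : Type*} [AddCommGroup S] [Module F S] [AddCommGroup M] [Module F M]
    (ρ : Representation F G S) (τ : Representation F G M) :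
    S ⊗[F] ↥(equivHom ρ τ) →ₗ[F] M :=
  TensorProduct.lift (Submodule.subtype (equivHom ρ τ)).flip

/-- The restriction of a representation to an invariant submodule. -/
def subRep {F : Type*} [Field F] {G : Type*} [Group G]
    {M : Type*} [AddCommGroup M] [Module F M]
    (τ : Representation F G M) (N : Submodule F M) (hN : ∀ g, ∀ x ∈ N, τ g x ∈ N) :
    Representation F G ↥N where
  toFun g := (τ g).restrict (hN g)
  map_one' := by
    refine LinearMap.ext fun x => Subtype.ext ?_
    show τ 1 x.1 = x.1
    rw [map_one]
    rfl
  map_mul' := by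
    intro g h
    refine LinearMap.ext fun x => Subtype.ext ?_
    show τ (g * h) x.1 = τ g (τ h x.1)
    rw [map_mul]
    rfl

theorem Function.Bijective.of_retract {α β α' β' : Type*} {f : α → β} {f' : α' → β'}
    {i : α' → α} {r : α → α'} {j : β' → β} {s : β → β'} (hf : Function.Bijective f)
    (hri : Function.LeftInverse r i) (hsj : Function.LeftInverse s j)
    (hi : j ∘ f' = f ∘ i) (hr : s ∘ f = f' ∘ r) : Function.Bijective f' := by
  refine ⟨fun x y hxy => hri.injective (hf.1 ?_), fun y => ?_⟩
  · exact (congrFun hi x).symm.trans ((congrArg j hxy).trans (congrFun hi y))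
  · obtain ⟨x, hx⟩ := hf.2 (j y)
    exact ⟨r x, by rw [← Function.comp_apply (f := f'), ← hr, Function.comp_apply, hx, hsj]⟩

theorem Submodule.projection_isIntertwining {k G M : Type*} [CommRing k] [Monoid G]
    [AddCommGroup M] [Module k M] (τ : Representation k G M) {p q : Submodule k M}
    (hp : ∀ g, ∀ x ∈ p, τ g x ∈ p) (hq : ∀ g, ∀ x ∈ q, τ g x ∈ q) (hpq : IsCompl p q)
    (g : G) (x : M) : p.projection q hpq (τ g x) = τ g (p.projection q hpq x) := by
  have hcomm : Commute (p.projection q hpq) (τ g) := by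
    refine (LinearMap.IsIdempotentElem.commute_iff (isIdempotentElem_projection hpq)).2 ⟨?_, ?_⟩
    · rw [range_projection]
      exact (Module.End.mem_invtSubmodule_iff_forall_mem_of_mem _).2 (hp g)
    · rw [ker_projection]
      exact (Module.End.mem_invtSubmodule_iff_forall_mem_of_mem _).2 (hq g)
  exact LinearMap.congr_fun hcomm.eq x

theorem Submodule.projectionOnto_isIntertwining {F G M : Type*} [Field F] [Group G]
    [AddCommGroup M] [Module F M] (τ : Representation F G M) {p q : Submodule F M}
    (hp : ∀ g, ∀ x ∈ p, τ g x ∈ p) (hq : ∀ g, ∀ x ∈ q, τ g x ∈ q) (hpq : IsCompl p q)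
    (g : G) (x : M) :
    p.projectionOnto q hpq (τ g x) = subRep τ p hp g (p.projectionOnto q hpq x) :=
  Subtype.ext (projection_isIntertwining τ hp hq hpq g x)

section

variable {F : Type*} [Field F] {G : Type*} [Group G]
  {S : Type*} [AddCommGroup S] [Module F S] (ρ : Representation F G S)
  {M N : Type*} [AddCommGroup M] [Module F M] [AddCommGroup N] [Module F N]
  {τ : Representation F G M} {τ' : Representation F G N}

def equivHomMap (f : M →ₗ[F] N) (hf : ∀ g x, f (τ g x) = τ' g (f x)) :
    equivHom ρ τ →ₗ[F] equivHom ρ τ' where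
  toFun φ := ⟨f ∘ₗ φ.1, fun g s => by
    rw [LinearMap.comp_apply, φ.2 g s, hf, LinearMap.comp_apply]⟩
  map_add' φ ψ := Subtype.ext (LinearMap.comp_add _ _ _)
  map_smul' c φ := Subtype.ext (LinearMap.comp_smul _ _ _)

theorem evalMap_naturality (f : M →ₗ[F] N) (hf : ∀ g x, f (τ g x) = τ' g (f x)) :
    f ∘ₗ evalMap ρ τ = evalMap ρ τ' ∘ₗ LinearMap.lTensor S (equivHomMap ρ f hf) :=
  TensorProduct.ext' fun _ _ => rfl

theorem lTensor_equivHomMap_leftInverse {i : M →ₗ[F] N} {r : N →ₗ[F] M}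
    (hi : ∀ g x, i (τ g x) = τ' g (i x)) (hr : ∀ g x, r (τ' g x) = τ g (r x))
    (hri : Function.LeftInverse r i) :
    Function.LeftInverse (LinearMap.lTensor S (equivHomMap ρ r hr))
      (LinearMap.lTensor S (equivHomMap ρ i hi)) := by
  have hcomp : equivHomMap ρ r hr ∘ₗ equivHomMap ρ i hi = LinearMap.id :=
    LinearMap.ext fun φ => Subtype.ext (LinearMap.ext fun s => hri (φ.1 s))
  intro t
  rw [← LinearMap.comp_apply, ← LinearMap.lTensor_comp, hcomp, LinearMap.lTensor_id,
    LinearMap.id_apply]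

end

theorem statement8_general {F : Type*} [Field F] {G : Type*} [Group G]
    {S : Type*} [AddCommGroup S] [Module F S] (ρ : Representation F G S)
    {M : Type*} [AddCommGroup M] [Module F M] (τ : Representation F G M)
    (htypic : Function.Bijective (evalMap ρ τ))
    (M' : Submodule F M) (hM' : ∀ g, ∀ x ∈ M', τ g x ∈ M')
    (hsummand : ∃ M'' : Submodule F M, (∀ g, ∀ x ∈ M'', τ g x ∈ M'') ∧ IsCompl M' M'') :
    Function.Bijective (evalMap ρ (subRep τ M' hM')) := by
  obtain ⟨M'', hM'', hcompl⟩ := hsummand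
  have hi : ∀ g x, M'.subtype (subRep τ M' hM' g x) = τ g (M'.subtype x) := fun _ _ => rfl
  have hr := M'.projectionOnto_isIntertwining τ hM' hM'' hcompl
  have hri : Function.LeftInverse (M'.projectionOnto M'' hcompl) M'.subtype :=
    Submodule.projectionOnto_apply_left hcompl
  exact htypic.of_retract (lTensor_equivHomMap_leftInverse ρ hi hr hri) hri
    (congrArg DFunLike.coe (evalMap_naturality ρ _ hi))
    (congrArg DFunLike.coe (evalMap_naturality ρ _ hr))

/-- Let `σ` (a representation `ρ` on `S`) be nonzero, finite-dimensional
with `End_{F[G]}(σ) = F`, and let `M` (with representation `τ`) be `σ`-typic, i.e. the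
evaluation map `σ ⊗_F Hom_{F[G]}(σ, M) → M` is an isomorphism.  If `M' ⊆ M` is an
`F[G]`-submodule which is a direct summand of `M`, then the evaluation map
`σ ⊗_F Hom_{F[G]}(σ, M') → M'` is also an isomorphism; in particular `M'` is `σ`-typic. -/
theorem statement8 {F : Type*} [Field F] {G : Type*} [Group G]
    {S : Type*} [AddCommGroup S] [Module F S] (ρ : Representation F G S)
    [Nontrivial S] [FiniteDimensional F S]
    (hEnd : ∀ φ : S →ₗ[F] S, (∀ (g : G) (s : S), φ (ρ g s) = ρ g (φ s)) →
      ∃ c : F, φ = c • LinearMap.id)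
    {M : Type*} [AddCommGroup M] [Module F M] (τ : Representation F G M)
    (htypic : Function.Bijective (evalMap ρ τ))
    (M' : Submodule F M) (hM' : ∀ g, ∀ x ∈ M', τ g x ∈ M')
    (hsummand : ∃ M'' : Submodule F M, (∀ g, ∀ x ∈ M'', τ g x ∈ M'') ∧ IsCompl M' M'') :
    Function.Bijective (evalMap ρ (subRep τ M' hM')) :=
  statement8_general ρ τ htypic M' hM' hsummand
end

section
/- Let G be a group, F a field, and let χ₁, χ₂ be one-dimensional F[G]-modules with χ₁ not isomorphic to χ₂. Let ρ be a two-dimensional F[G]-module that is a nonsplit extension 0 → χ₁ → ρ → χ₂ → 0 (so in particular End_{F[G]}(ρ) = F). Let M₀ be an F-vector space and M = ρ ⊗_F M₀ with G acting through ρ, and let M' ⊆ M be an F[G]-submodule. Set M₀' = Hom_{F[G]}(χ₁, M'); the evaluation map ev : χ₁ ⊗_F M₀' → M', v ⊗ φ ↦ φ(v), is injective. Then there exists a unique injective F[G]-module homomorphism ι : M' → ρ ⊗_F M₀' such that the composite ι ∘ ev : χ₁ ⊗_F M₀' → ρ ⊗_F M₀' equals the map induced by the inclusion χ₁ ↪ ρ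 tensored with the identity of M₀'. -/
/-!
Choose a basis `b 0 = v₀`, `b 1` of `V`; then `ρ g` has matrix `[[χ₁ g, c g], [0, χ₂ g]]`, and
nonsplitness says that `c` is not a multiple of `χ₁ - χ₂`. Write `x ∈ V ⊗ M₀` as
`b 0 ⊗ x₀ + b 1 ⊗ x₁`. For `x ∈ M'` and every `g`,
`g x - χ₂ g • x = b 0 ⊗ ((χ₁ g - χ₂ g) x₀ + c g x₁)` lies in `M'`; since `χ₁ - χ₂` and `c` are
linearly independent functions of `g`, this forces `b 0 ⊗ x₀` and `b 0 ⊗ x₁` into `M'`. They are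
`χ₁`-eigenvectors of `M'`, i.e. elements of `Hom(χ₁, M')`, and
`ι x = b 0 ⊗ [b 0 ⊗ x₀] + b 1 ⊗ [b 0 ⊗ x₁]`.
For uniqueness, the difference of two such maps kills the `χ₁`-eigenvectors, among them
`g x - χ₂ g • x`, so its values are `χ₂`-eigenvectors of `V ⊗ Hom(χ₁, M')`; by the same linear
independence these vanish.
-/

open TensorProduct

/-- The one-dimensional representation of `G` on `F` given by a character `χ : G → Fˣ`. -/
def charRep {F : Type*} [Field F] {G : Type*} [Group G] (χ : G →* Fˣ) :
    Representation F G F where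
  toFun g := (χ g : F) • LinearMap.id
  map_one' := by
    simp [Module.End.one_eq_id]
  map_mul' := by
    intro g h
    refine LinearMap.ext fun x => ?_
    simp only [map_mul, Units.val_mul, LinearMap.smul_apply, LinearMap.id_apply,
      Module.End.mul_apply, smul_eq_mul]
    ring

section TensorCoord

variable {F V N ι : Type*} [Field F] [AddCommMonoid V] [Module F V] [AddCommMonoid N] [Module F N]

noncomputable def tensorCoord (b : Module.Basis ι F V) (i : ι) : V ⊗[F] N →ₗ[F] N :=
  TensorProduct.lid F N ∘ₗ (b.coord i).rTensor N

@[simp]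
lemma tensorCoord_tmul (b : Module.Basis ι F V) (i : ι) (v : V) (n : N) :
    tensorCoord b i (v ⊗ₜ n) = b.repr v i • n := by
  simp [tensorCoord]

lemma sum_tmul_tensorCoord [Fintype ι] (b : Module.Basis ι F V) (x : V ⊗[F] N) :
    ∑ i, b i ⊗ₜ tensorCoord b i x = x := by
  classical
  conv_rhs => rw [← (equivFinsuppOfBasisLeft b).symm_apply_apply x,
    equivFinsuppOfBasisLeft_symm_apply, Finsupp.sum_fintype _ _ (by simp)]
  simp only [tensorCoord, LinearMap.comp_apply, LinearEquiv.coe_coe,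
    ← equivFinsuppOfBasisLeft_apply]

lemma tmul_tensorCoord_add (b : Module.Basis (Fin 2) F V) (x : V ⊗[F] N) :
    b 0 ⊗ₜ tensorCoord b 0 x + b 1 ⊗ₜ tensorCoord b 1 x = x := by
  simpa [Fin.sum_univ_two] using sum_tmul_tensorCoord b x

@[simp]
lemma tensorCoord_zero_tmul_add (b : Module.Basis (Fin 2) F V) (n m : N) :
    tensorCoord b 0 (b 0 ⊗ₜ n + b 1 ⊗ₜ m) = n := by
  simp

@[simp]
lemma tensorCoord_one_tmul_add (b : Module.Basis (Fin 2) F V) (n m : N) :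
    tensorCoord b 1 (b 0 ⊗ₜ n + b 1 ⊗ₜ m) = m := by
  simp

lemma ext_tensorCoord (b : Module.Basis (Fin 2) F V) {x y : V ⊗[F] N}
    (h₀ : tensorCoord b 0 x = tensorCoord b 0 y) (h₁ : tensorCoord b 1 x = tensorCoord b 1 y) :
    x = y := by
  rw [← tmul_tensorCoord_add b x, ← tmul_tensorCoord_add b y, h₀, h₁]

end TensorCoord

lemma map_id_lTensor_comm {R V P Q : Type*} [CommSemiring R] [AddCommMonoid V] [Module R V]
    [AddCommMonoid P] [Module R P] [AddCommMonoid Q] [Module R Q] (f : V →ₗ[R] V)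
    (e : P ≃ₗ[R] Q) (y : V ⊗[R] P) :
    TensorProduct.map f LinearMap.id (e.lTensor V y) =
      e.lTensor V (TensorProduct.map f LinearMap.id y) := by
  induction y with
  | zero => simp
  | tmul v p => simp
  | add y z hy hz => simp only [map_add, hy, hz]

lemma eq_zero_of_forall_smul_add_smul_eq_zero {G F N : Type*} [Field F] [AddCommGroup N]
    [Module F N] {δ c : G → F} (hδ : δ ≠ 0) (hc : ¬∃ t : F, ∀ g, c g = t * δ g) {s u : N}
    (h : ∀ g, δ g • s + c g • u = 0) : s = 0 ∧ u = 0 := by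
  have hu : u = 0 := by
    by_contra hu
    obtain ⟨f, hf⟩ := Module.Projective.exists_dual_ne_zero F hu
    refine hc ⟨-(f s / f u), fun g => ?_⟩
    have hg := congrArg f (h g)
    simp only [map_add, map_smul, smul_eq_mul, map_zero] at hg
    field_simp
    linear_combination hg
  obtain ⟨g₀, hg₀⟩ := Function.ne_iff.mp hδ
  have hs := h g₀
  rw [hu, smul_zero, add_zero, smul_eq_zero] at hs
  exact ⟨hs.resolve_left hg₀, hu⟩

section Extension

variable {F G V : Type*} [Field F] [Group G] [AddCommGroup V] [Module F V]

structure IsExtensionBasis (ρ : Representation F G V) (χ₁ χ₂ : G →* Fˣ) (c : G → F)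
    (b : Module.Basis (Fin 2) F V) : Prop where
  apply_zero (g : G) : ρ g (b 0) = (χ₁ g : F) • b 0
  apply_one (g : G) : ρ g (b 1) = (χ₂ g : F) • b 1 + c g • b 0

variable {ρ : Representation F G V} {χ₁ χ₂ : G →* Fˣ} {c : G → F} {b : Module.Basis (Fin 2) F V}

lemma IsExtensionBasis.map_apply {N : Type*} [AddCommMonoid N] [Module F N]
    (hb : IsExtensionBasis ρ χ₁ χ₂ c b) (g : G) (x : V ⊗[F] N) :
    TensorProduct.map (ρ g) LinearMap.id x =
      b 0 ⊗ₜ ((χ₁ g : F) • tensorCoord b 0 x + c g • tensorCoord b 1 x) +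
        b 1 ⊗ₜ ((χ₂ g : F) • tensorCoord b 1 x) := by
  conv_lhs => rw [← tmul_tensorCoord_add b x]
  simp only [map_add, map_tmul, hb.apply_zero, hb.apply_one, LinearMap.id_apply, add_tmul,
    tmul_add, smul_tmul]
  abel

lemma IsExtensionBasis.tensorCoord_zero_map {N : Type*} [AddCommMonoid N] [Module F N]
    (hb : IsExtensionBasis ρ χ₁ χ₂ c b) (g : G) (x : V ⊗[F] N) :
    tensorCoord b 0 (TensorProduct.map (ρ g) LinearMap.id x) =
      (χ₁ g : F) • tensorCoord b 0 x + c g • tensorCoord b 1 x := by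
  rw [hb.map_apply, tensorCoord_zero_tmul_add]

lemma IsExtensionBasis.tensorCoord_one_map {N : Type*} [AddCommMonoid N] [Module F N]
    (hb : IsExtensionBasis ρ χ₁ χ₂ c b) (g : G) (x : V ⊗[F] N) :
    tensorCoord b 1 (TensorProduct.map (ρ g) LinearMap.id x) =
      (χ₂ g : F) • tensorCoord b 1 x := by
  rw [hb.map_apply, tensorCoord_one_tmul_add]

lemma IsExtensionBasis.map_zero_tmul {N : Type*} [AddCommMonoid N] [Module F N]
    (hb : IsExtensionBasis ρ χ₁ χ₂ c b) (g : G) (n : N) :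
    TensorProduct.map (ρ g) LinearMap.id (b 0 ⊗ₜ n) = (χ₁ g : F) • (b 0 ⊗ₜ[F] n) := by
  rw [map_tmul, hb.apply_zero, LinearMap.id_apply, smul_tmul']

lemma coe_sub_coe_ne_zero (hne : χ₁ ≠ χ₂) : (fun g => (χ₁ g : F) - χ₂ g) ≠ 0 := by
  intro h
  exact hne (MonoidHom.ext fun g => Units.ext (sub_eq_zero.mp (congrFun h g)))

lemma IsExtensionBasis.eq_tmul_of_map_eq_smul {N : Type*} [AddCommGroup N] [Module F N]
    (hb : IsExtensionBasis ρ χ₁ χ₂ c b) (hne : χ₁ ≠ χ₂)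
    {x : V ⊗[F] N} (hx : ∀ g, TensorProduct.map (ρ g) LinearMap.id x = (χ₁ g : F) • x) :
    x = b 0 ⊗ₜ tensorCoord b 0 x := by
  obtain ⟨g₀, hg₀⟩ := Function.ne_iff.mp (coe_sub_coe_ne_zero hne)
  have h₁ : ((χ₁ g₀ : F) - χ₂ g₀) • tensorCoord b 1 x = 0 := by
    rw [sub_smul, ← map_smul, ← hx, hb.tensorCoord_one_map, sub_self]
  conv_lhs => rw [← tmul_tensorCoord_add b x, (smul_eq_zero.mp h₁).resolve_left hg₀, tmul_zero,
    add_zero]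

lemma IsExtensionBasis.map_sub_smul {N : Type*} [AddCommGroup N] [Module F N]
    (hb : IsExtensionBasis ρ χ₁ χ₂ c b) (g : G) (x : V ⊗[F] N) :
    TensorProduct.map (ρ g) LinearMap.id x - (χ₂ g : F) • x =
      b 0 ⊗ₜ (((χ₁ g : F) - χ₂ g) • tensorCoord b 0 x + c g • tensorCoord b 1 x) := by
  rw [hb.map_apply]
  conv_lhs => arg 2; rw [← tmul_tensorCoord_add b x]
  simp only [smul_add, tmul_add, tmul_sub, tmul_smul, sub_smul]
  abel

lemma IsExtensionBasis.eq_zero_of_map_eq_smul {N : Type*} [AddCommGroup N] [Module F N]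
    (hb : IsExtensionBasis ρ χ₁ χ₂ c b) (hne : χ₁ ≠ χ₂)
    (hns : ¬∃ t : F, ∀ g, c g = t * ((χ₁ g : F) - χ₂ g)) {y : V ⊗[F] N}
    (hy : ∀ g, TensorProduct.map (ρ g) LinearMap.id y = (χ₂ g : F) • y) : y = 0 := by
  have h : ∀ g, ((χ₁ g : F) - χ₂ g) • tensorCoord b 0 y + c g • tensorCoord b 1 y = 0 := by
    intro g
    simpa [hy g] using (congrArg (tensorCoord b 0) (hb.map_sub_smul g y)).symm
  obtain ⟨h₀, h₁⟩ := eq_zero_of_forall_smul_add_smul_eq_zero (coe_sub_coe_ne_zero hne) hns h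
  exact ext_tensorCoord b (by simpa using h₀) (by simpa using h₁)

lemma IsExtensionBasis.tmul_tensorCoord_mem {N : Type*} [AddCommGroup N] [Module F N]
    (hb : IsExtensionBasis ρ χ₁ χ₂ c b) (hne : χ₁ ≠ χ₂)
    (hns : ¬∃ t : F, ∀ g, c g = t * ((χ₁ g : F) - χ₂ g)) {M : Submodule F (V ⊗[F] N)}
    (hM : ∀ g, ∀ x ∈ M, TensorProduct.map (ρ g) LinearMap.id x ∈ M) {x : V ⊗[F] N} (hx : x ∈ M)
    (i : Fin 2) : b 0 ⊗ₜ tensorCoord b i x ∈ M := by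
  set B := M.comap (TensorProduct.mk F V N (b 0))
  have hB : ∀ g, ((χ₁ g : F) - χ₂ g) • tensorCoord b 0 x + c g • tensorCoord b 1 x ∈ B := by
    intro g
    show b 0 ⊗ₜ _ ∈ M
    rw [← hb.map_sub_smul]
    exact M.sub_mem (hM g x hx) (M.smul_mem _ hx)
  have h : ∀ g, ((χ₁ g : F) - χ₂ g) • B.mkQ (tensorCoord b 0 x) +
      c g • B.mkQ (tensorCoord b 1 x) = 0 := fun g => by
    simpa using (Submodule.Quotient.mk_eq_zero B).mpr (hB g)
  obtain ⟨h₀, h₁⟩ := eq_zero_of_forall_smul_add_smul_eq_zero (coe_sub_coe_ne_zero hne) hns h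
  fin_cases i
  · exact (Submodule.Quotient.mk_eq_zero B).mp h₀
  · exact (Submodule.Quotient.mk_eq_zero B).mp h₁

end Extension

lemma exists_basis_fin_two_zero_eq {F V : Type*} [Field F] [AddCommGroup V] [Module F V]
    (hdim : Module.finrank F V = 2) {v₀ : V} (hv₀ : v₀ ≠ 0) :
    ∃ b : Module.Basis (Fin 2) F V, b 0 = v₀ := by
  obtain ⟨w, hw⟩ : ∃ w, w ∉ Submodule.span F {v₀} := by
    by_contra! h
    have h₁ := finrank_span_singleton (K := F) hv₀
    rw [Submodule.eq_top_iff'.mpr h, finrank_top, hdim] at h₁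
    exact absurd h₁ (by norm_num)
  have hli : LinearIndependent F ![v₀, w] :=
    (LinearIndependent.pair_iff' hv₀).mpr fun a ha =>
      hw (ha ▸ Submodule.smul_mem _ a (Submodule.mem_span_singleton_self v₀))
  exact ⟨basisOfLinearIndependentOfCardEqFinrank hli (by simp [hdim]), by simp⟩

lemma exists_isExtensionBasis {F G V : Type*} [Field F] [Group G] [AddCommGroup V] [Module F V]
    {χ₁ χ₂ : G →* Fˣ} {ρ : Representation F G V} (hdim : Module.finrank F V = 2) {v₀ : V}
    (hv₀ : v₀ ≠ 0) (heig : ∀ g : G, ρ g v₀ = (χ₁ g : F) • v₀)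
    (hquot : ∀ (g : G) (v : V), ρ g v - (χ₂ g : F) • v ∈ Submodule.span F {v₀})
    (hnonsplit : ¬∃ w : V, w ∉ Submodule.span F {v₀} ∧ ∀ g : G, ρ g w = (χ₂ g : F) • w) :
    ∃ (b : Module.Basis (Fin 2) F V) (c : G → F), b 0 = v₀ ∧ IsExtensionBasis ρ χ₁ χ₂ c b ∧
      ¬∃ t : F, ∀ g, c g = t * ((χ₁ g : F) - χ₂ g) := by
  obtain ⟨b, rfl⟩ := exists_basis_fin_two_zero_eq hdim hv₀
  choose c hc using fun g => Submodule.mem_span_singleton.mp (hquot g (b 1))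
  refine ⟨b, c, rfl, ⟨heig, fun g => by rw [hc g]; abel⟩, fun ⟨t, ht⟩ => hnonsplit ?_⟩
  refine ⟨b 1 - t • b 0, fun hmem => ?_, fun g => ?_⟩
  · obtain ⟨a, ha⟩ := Submodule.mem_span_singleton.mp hmem
    simpa using congrArg (fun v => b.repr v 1) ha
  · rw [map_sub, map_smul, heig]
    linear_combination (norm := module) -(hc g) + ht g • b 0

section CharHom

variable {F G W : Type*} [Field F] [Group G] [AddCommGroup W] [Module F W]

def charEigenspace (τ : Representation F G W) (χ : G →* Fˣ) : Submodule F W :=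
  ⨅ g, Module.End.eigenspace (τ g) (χ g : F)

lemma mem_charEigenspace {τ : Representation F G W} {χ : G →* Fˣ} {w : W} :
    w ∈ charEigenspace τ χ ↔ ∀ g, τ g w = (χ g : F) • w := by
  simp [charEigenspace]

@[simp]
lemma charRep_apply (χ : G →* Fˣ) (g : G) (s : F) : charRep χ g s = (χ g : F) * s := rfl

noncomputable def charHomEquiv (τ : Representation F G W) (χ : G →* Fˣ) :
    equivHom (charRep χ) τ ≃ₗ[F] charEigenspace τ χ where
  toFun φ := ⟨φ.1 1, mem_charEigenspace.2 fun g => by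
    rw [← φ.2 g 1, charRep_apply, ← smul_eq_mul, map_smul]⟩
  invFun w := ⟨LinearMap.toSpanSingleton F W w, fun g s => by
    simp [mem_charEigenspace.1 w.2, smul_smul, mul_comm]⟩
  left_inv φ := Subtype.ext (LinearMap.ext_ring (by simp))
  right_inv w := by simp
  map_add' _ _ := rfl
  map_smul' _ _ := rfl

@[simp]
lemma coe_charHomEquiv_apply (τ : Representation F G W) (χ : G →* Fˣ)
    (φ : equivHom (charRep χ) τ) : (charHomEquiv τ χ φ : W) = φ.1 1 := rfl

lemma evalMap_charRep_tmul (τ : Representation F G W) (χ : G →* Fˣ) (s : F)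
    (φ : equivHom (charRep χ) τ) :
    evalMap (charRep χ) τ (s ⊗ₜ φ) = s • (charHomEquiv τ χ φ : W) := by
  simp [evalMap, ← map_smul]

lemma evalMap_charRep_injective (τ : Representation F G W) (χ : G →* Fˣ) :
    Function.Injective (evalMap (charRep χ) τ) := by
  have h : evalMap (charRep χ) τ =
      (charEigenspace τ χ).subtype ∘ₗ (charHomEquiv τ χ).toLinearMap ∘ₗ
        (TensorProduct.lid F _).toLinearMap := by
    ext φ
    simp [evalMap_charRep_tmul]
  rw [h]
  exact (charEigenspace τ χ).injective_subtype.comp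
    ((charHomEquiv τ χ).injective.comp (TensorProduct.lid F _).injective)

end CharHom

section Lift

variable {F G V N : Type*} [Field F] [Group G] [AddCommGroup V] [Module F V]
  [AddCommGroup N] [Module F N] {ρ : Representation F G V} {χ₁ χ₂ : G →* Fˣ} {c : G → F}
  {b : Module.Basis (Fin 2) F V} {M : Submodule F (V ⊗[F] N)}

lemma tprod_trivial_apply (ρ : Representation F G V) (g : G) :
    ρ.tprod (Representation.trivial F G N) g = TensorProduct.map (ρ g) LinearMap.id := by
  rw [Representation.tprod_apply]
  rfl

variable (hM : ∀ g, ∀ x ∈ M, ρ.tprod (Representation.trivial F G N) g x ∈ M)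

local notation "τ" => subRep (ρ.tprod (Representation.trivial F G N)) M hM

lemma coe_subRep_tprod_trivial_apply (g : G) (x : M) :
    (τ g x : V ⊗[F] N) = TensorProduct.map (ρ g) LinearMap.id x := by
  rw [← tprod_trivial_apply]
  rfl

lemma IsExtensionBasis.mem_charEigenspace_of_coe_eq_tmul (hb : IsExtensionBasis ρ χ₁ χ₂ c b)
    {y : M} {n : N} (hy : (y : V ⊗[F] N) = b 0 ⊗ₜ n) : y ∈ charEigenspace τ χ₁ :=
  mem_charEigenspace.2 fun g => Subtype.ext <| by
    rw [coe_subRep_tprod_trivial_apply, hy, hb.map_zero_tmul, Submodule.coe_smul, hy]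

lemma IsExtensionBasis.sub_smul_mem_charEigenspace (hb : IsExtensionBasis ρ χ₁ χ₂ c b) (g : G)
    (x : M) : τ g x - (χ₂ g : F) • x ∈ charEigenspace τ χ₁ :=
  hb.mem_charEigenspace_of_coe_eq_tmul hM <| by
    rw [← hb.map_sub_smul, Submodule.coe_sub, coe_subRep_tprod_trivial_apply,
      Submodule.coe_smul]

lemma IsExtensionBasis.ext_of_eqOn_charEigenspace (hb : IsExtensionBasis ρ χ₁ χ₂ c b)
    (hne : χ₁ ≠ χ₂) (hns : ¬∃ t : F, ∀ g, c g = t * ((χ₁ g : F) - χ₂ g))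
    {P : Type*} [AddCommGroup P] [Module F P] {f f' : M →ₗ[F] V ⊗[F] P}
    (hf : ∀ g x, f (τ g x) = TensorProduct.map (ρ g) LinearMap.id (f x))
    (hf' : ∀ g x, f' (τ g x) = TensorProduct.map (ρ g) LinearMap.id (f' x))
    (heq : ∀ x ∈ charEigenspace τ χ₁, f x = f' x) : f = f' := by
  refine LinearMap.ext fun x => sub_eq_zero.mp (hb.eq_zero_of_map_eq_smul hne hns fun g => ?_)
  have h := heq _ (hb.sub_smul_mem_charEigenspace hM g x)
  rw [map_sub, map_sub, map_smul, map_smul, hf, hf'] at h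
  rw [map_sub, sub_eq_sub_iff_sub_eq_sub.mp h, smul_sub]

noncomputable def IsExtensionBasis.eigenCoord (hb : IsExtensionBasis ρ χ₁ χ₂ c b) (hne : χ₁ ≠ χ₂)
    (hns : ¬∃ t : F, ∀ g, c g = t * ((χ₁ g : F) - χ₂ g)) (i : Fin 2) :
    M →ₗ[F] charEigenspace τ χ₁ where
  toFun x := ⟨⟨b 0 ⊗ₜ tensorCoord b i (x : V ⊗[F] N), hb.tmul_tensorCoord_mem hne hns
      (fun g y hy => tprod_trivial_apply (N := N) ρ g ▸ hM g y hy) x.2 i⟩,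
    hb.mem_charEigenspace_of_coe_eq_tmul hM rfl⟩
  map_add' _ _ := by ext; simp [tmul_add]
  map_smul' _ _ := by ext; simp

noncomputable def IsExtensionBasis.lift (hb : IsExtensionBasis ρ χ₁ χ₂ c b) (hne : χ₁ ≠ χ₂)
    (hns : ¬∃ t : F, ∀ g, c g = t * ((χ₁ g : F) - χ₂ g)) : M →ₗ[F] V ⊗[F] charEigenspace τ χ₁ :=
  TensorProduct.mk F V (charEigenspace τ χ₁) (b 0) ∘ₗ hb.eigenCoord hM hne hns 0 +
    TensorProduct.mk F V (charEigenspace τ χ₁) (b 1) ∘ₗ hb.eigenCoord hM hne hns 1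

section

variable (hb : IsExtensionBasis ρ χ₁ χ₂ c b) (hne : χ₁ ≠ χ₂)
  (hns : ¬∃ t : F, ∀ g, c g = t * ((χ₁ g : F) - χ₂ g))

lemma IsExtensionBasis.lift_apply (x : M) :
    hb.lift hM hne hns x =
      b 0 ⊗ₜ hb.eigenCoord hM hne hns 0 x + b 1 ⊗ₜ hb.eigenCoord hM hne hns 1 x := rfl

lemma IsExtensionBasis.lift_coe (y : charEigenspace τ χ₁) : hb.lift hM hne hns y = b 0 ⊗ₜ y := by
  have hy : ((y : M) : V ⊗[F] N) = b 0 ⊗ₜ tensorCoord b 0 (y : V ⊗[F] N) :=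
    hb.eq_tmul_of_map_eq_smul hne fun g => by
      rw [← coe_subRep_tprod_trivial_apply hM, mem_charEigenspace.1 y.2 g, Submodule.coe_smul]
  have h₀ : hb.eigenCoord hM hne hns 0 y = y := Subtype.ext (Subtype.ext hy.symm)
  have h₁ : hb.eigenCoord hM hne hns 1 y = 0 := by
    ext
    show b 0 ⊗ₜ tensorCoord b 1 ((y : M) : V ⊗[F] N) = 0
    rw [hy, tensorCoord_tmul, Module.Basis.repr_self, Finsupp.single_apply, if_neg zero_ne_one,
      zero_smul, tmul_zero]
  rw [hb.lift_apply, h₀, h₁, tmul_zero, add_zero]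

lemma IsExtensionBasis.eigenCoord_zero_apply_map (g : G) (x : M) :
    hb.eigenCoord hM hne hns 0 (τ g x) =
      (χ₁ g : F) • hb.eigenCoord hM hne hns 0 x + c g • hb.eigenCoord hM hne hns 1 x := by
  ext
  simp [IsExtensionBasis.eigenCoord, coe_subRep_tprod_trivial_apply, hb.tensorCoord_zero_map,
    tmul_add]

lemma IsExtensionBasis.eigenCoord_one_apply_map (g : G) (x : M) :
    hb.eigenCoord hM hne hns 1 (τ g x) = (χ₂ g : F) • hb.eigenCoord hM hne hns 1 x := by
  ext
  simp [IsExtensionBasis.eigenCoord, coe_subRep_tprod_trivial_apply, hb.tensorCoord_one_map]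

lemma IsExtensionBasis.lift_apply_map (g : G) (x : M) :
    hb.lift hM hne hns (τ g x) = TensorProduct.map (ρ g) LinearMap.id (hb.lift hM hne hns x) := by
  rw [hb.map_apply, hb.lift_apply, hb.lift_apply, tensorCoord_zero_tmul_add,
    tensorCoord_one_tmul_add, hb.eigenCoord_zero_apply_map, hb.eigenCoord_one_apply_map]

lemma IsExtensionBasis.tensorCoord_lift (i : Fin 2) (x : M) :
    tensorCoord b i (hb.lift hM hne hns x) = hb.eigenCoord hM hne hns i x := by
  fin_cases i <;> simp [hb.lift_apply]

lemma IsExtensionBasis.lift_injective : Function.Injective (hb.lift hM hne hns) := by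
  refine (injective_iff_map_eq_zero _).2 fun x hx => Subtype.ext ?_
  have h : ∀ i, tensorCoord b i (x : V ⊗[F] N) = 0 := fun i => by
    have hi := hb.tensorCoord_lift hM hne hns i x
    rw [hx, map_zero] at hi
    simpa [IsExtensionBasis.eigenCoord] using
      (congrArg (fun y : charEigenspace τ χ₁ => tensorCoord b 0 ((y : M) : V ⊗[F] N)) hi).symm
  exact ext_tensorCoord b (by simp [h]) (by simp [h])

lemma IsExtensionBasis.eq_lift {f : M →ₗ[F] V ⊗[F] charEigenspace τ χ₁}
    (hf : ∀ g x, f (τ g x) = TensorProduct.map (ρ g) LinearMap.id (f x))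
    (hf₀ : ∀ y : charEigenspace τ χ₁, f y = b 0 ⊗ₜ y) : f = hb.lift hM hne hns :=
  hb.ext_of_eqOn_charEigenspace hM hne hns (P := charEigenspace τ χ₁) hf
    (hb.lift_apply_map hM hne hns) fun x hx => by
      rw [show x = ((⟨x, hx⟩ : charEigenspace τ χ₁) : M) from rfl, hf₀, hb.lift_coe]

end

lemma IsExtensionBasis.existsUnique_lift (hb : IsExtensionBasis ρ χ₁ χ₂ c b) (hne : χ₁ ≠ χ₂)
    (hns : ¬∃ t : F, ∀ g, c g = t * ((χ₁ g : F) - χ₂ g)) :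
    ∃! ι : M →ₗ[F] V ⊗[F] equivHom (charRep χ₁) τ, Function.Injective ι ∧
      (∀ g x, ι (τ g x) = TensorProduct.map (ρ g) LinearMap.id (ι x)) ∧
      ∀ (s : F) φ, ι (evalMap (charRep χ₁) τ (s ⊗ₜ φ)) = (s • b 0) ⊗ₜ φ := by
  set e := (charHomEquiv τ χ₁).lTensor V
  refine ⟨e.symm.toLinearMap ∘ₗ hb.lift hM hne hns,
    ⟨e.symm.injective.comp (hb.lift_injective hM hne hns), fun g x => ?_, fun s φ => ?_⟩, ?_⟩
  · rw [LinearMap.comp_apply, LinearMap.comp_apply, hb.lift_apply_map]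
    exact (map_id_lTensor_comm _ _ _).symm
  · rw [evalMap_charRep_tmul, ← Submodule.coe_smul, LinearMap.comp_apply, hb.lift_coe]
    simp [e, smul_tmul]
  · rintro ι ⟨-, hmap, hev⟩
    have h : e.toLinearMap ∘ₗ ι = hb.lift hM hne hns := by
      refine hb.eq_lift hM hne hns (fun g x => ?_) fun y => ?_
      · rw [LinearMap.comp_apply, LinearMap.comp_apply, hmap]
        exact (map_id_lTensor_comm _ _ _).symm
      · have := hev 1 ((charHomEquiv τ χ₁).symm y)
        rw [evalMap_charRep_tmul, LinearEquiv.apply_symm_apply, one_smul, one_smul] at this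
        simp [e, this]
    rw [← h]
    exact LinearMap.ext fun x => (e.symm_apply_apply (ι x)).symm

end Lift

/-- Let `χ₁ ≠ χ₂` be characters of `G` over `F`, and `ρ` a
two-dimensional nonsplit extension `0 → χ₁ → ρ → χ₂ → 0` (with `χ₁`-eigenvector `v₀`).
Let `M = ρ ⊗_F M₀` with `G` acting through `ρ`, and `M' ⊆ M` an `F[G]`-submodule.
Set `M₀' = Hom_{F[G]}(χ₁, M')`; the evaluation map `ev : χ₁ ⊗_F M₀' → M'` is injective,
and there exists a unique injective `F[G]`-module homomorphism `ι : M' → ρ ⊗_F M₀'`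
whose composite with `ev` is induced by the inclusion `χ₁ ↪ ρ` tensored with `id`. -/
theorem statement9 {F : Type*} [Field F] {G : Type*} [Group G]
    (χ₁ χ₂ : G →* Fˣ) (hne : χ₁ ≠ χ₂)
    {V : Type*} [AddCommGroup V] [Module F V] (ρ : Representation F G V)
    (hdim : Module.finrank F V = 2)
    (v₀ : V) (hv₀ : v₀ ≠ 0)
    (heig : ∀ g : G, ρ g v₀ = (χ₁ g : F) • v₀)
    (hquot : ∀ (g : G) (v : V), ρ g v - (χ₂ g : F) • v ∈ Submodule.span F {v₀})
    (hnonsplit : ¬∃ w : V, w ∉ Submodule.span F {v₀} ∧ ∀ g : G, ρ g w = (χ₂ g : F) • w)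
    {M₀ : Type*} [AddCommGroup M₀] [Module F M₀]
    (M' : Submodule F (V ⊗[F] M₀))
    (hM' : ∀ g, ∀ x ∈ M',
      (ρ.tprod (Representation.trivial F (G := G) (V := M₀))) g x ∈ M') :
    Function.Injective
      (evalMap (charRep χ₁)
        (subRep (ρ.tprod (Representation.trivial F (G := G) (V := M₀))) M' hM')) ∧
    ∃! ι : ↥M' →ₗ[F]
        (V ⊗[F] ↥(equivHom (charRep χ₁)
          (subRep (ρ.tprod (Representation.trivial F (G := G) (V := M₀))) M' hM'))),
      Function.Injective ι ∧
      (∀ (g : G) (x : ↥M'),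
        ι ((subRep (ρ.tprod (Representation.trivial F (G := G) (V := M₀))) M' hM') g x) =
          TensorProduct.map (ρ g) LinearMap.id (ι x)) ∧
      (∀ (c : F) (φ : ↥(equivHom (charRep χ₁)
          (subRep (ρ.tprod (Representation.trivial F (G := G) (V := M₀))) M' hM'))),
        ι (evalMap (charRep χ₁)
            (subRep (ρ.tprod (Representation.trivial F (G := G) (V := M₀))) M' hM')
            (c ⊗ₜ[F] φ)) =
          (c • v₀) ⊗ₜ[F] φ) := by
  obtain ⟨b, c, rfl, hb, hns⟩ := exists_isExtensionBasis hdim hv₀ heig hquot hnonsplit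
  exact ⟨evalMap_charRep_injective _ _, hb.existsUnique_lift hM' hne hns⟩
end

section
/- The quotient of U(g) by the two-sided ideal generated by the 2f elements e_j·f_j (0 ≤ j ≤ f−1) and h_j (0 ≤ j ≤ f−1) is isomorphic as an F-algebra to the quotient of the polynomial ring F[X_j, Y_j : 0 ≤ j ≤ f−1] by the ideal (X_j·Y_j : 0 ≤ j ≤ f−1), via e_j ↦ X_j and f_j ↦ Y_j. -/
/-- The two-sided ideal generated by a set `s` in a (possibly noncommutative) ring,
realized as the left ideal generated by all elements `u * a * v` with `a ∈ s`. -/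
def twoSidedSpan {R : Type*} [Ring R] (s : Set R) : Ideal R :=
  Ideal.span {x | ∃ a ∈ s, ∃ u v : R, x = u * a * v}

/-!
Every bracket `⁅x, y⁆` lies in the span of the `h_j`, and `U(g)` is generated by `g`, so
`U(g)/J` is commutative, where `J = (e_j f_j, h_j)`. Hence `X_j ↦ e_j`, `Y_j ↦ f_j` defines an
algebra map `F[X, Y]/(X_j Y_j) → U(g)/J`. In the other direction, `e_j ↦ X_j`, `f_j ↦ Y_j`,
`h_j ↦ 0` is a Lie algebra map into a commutative algebra (it kills all brackets), so it extends
to `U(g)` and kills `J`. The two induced maps invert each other on generators, hence are mutually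
inverse.
-/

open MvPolynomial UniversalEnvelopingAlgebra

attribute [local instance] LieRing.ofAssociativeRing

section TwoSidedSpan

variable {A : Type*} [Ring A]

theorem subset_twoSidedSpan (s : Set A) : s ⊆ twoSidedSpan s := fun a ha =>
  Ideal.subset_span ⟨a, ha, 1, 1, by rw [one_mul, mul_one]⟩

instance (s : Set A) : (twoSidedSpan s).IsTwoSided where
  mul_mem_of_left b ha := by
    induction ha using Submodule.span_induction with
    | mem x hx =>
      obtain ⟨a, ha, u, v, rfl⟩ := hx
      exact Ideal.subset_span ⟨a, ha, u, v * b, by simp only [mul_assoc]⟩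
    | zero => rw [zero_mul]; exact zero_mem _
    | add x y _ _ hx hy => rw [add_mul]; exact add_mem hx hy
    | smul c x _ hx => rw [smul_eq_mul, mul_assoc]; exact Ideal.mul_mem_left _ c hx

end TwoSidedSpan

theorem Algebra.commute_of_adjoin_eq_top {R A : Type*} [CommSemiring R] [Semiring A]
    [Algebra R A] {s : Set A} (hs : adjoin R s = ⊤) (hcomm : ∀ a ∈ s, ∀ b ∈ s, Commute a b)
    (x y : A) : Commute x y := by
  have hmem : ∀ z : A, z ∈ adjoin R s := fun z => hs ▸ Algebra.mem_top
  have hsx : ∀ a ∈ s, Commute a x := fun a ha =>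
    commute_of_mem_adjoin_of_forall_mem_commute (hmem x) (hcomm a ha)
  exact commute_of_mem_adjoin_of_forall_mem_commute (hmem y) fun a ha => (hsx a ha).symm

theorem LieAlgebra.lie_mem_of_basis {R L η : Type*} [CommRing R] [LieRing L] [LieAlgebra R L]
    (B : Module.Basis η R L) {S : Submodule R L} (hS : ∀ i j, ⁅B i, B j⁆ ∈ S) (x y : L) :
    ⁅x, y⁆ ∈ S := by
  let bracket : L →ₗ[R] L →ₗ[R] L := LinearMap.mk₂ R (⁅·, ·⁆) add_lie smul_lie lie_add lie_smul
  have : bracket.compr₂ S.mkQ = 0 :=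
    LinearMap.ext_basis B B fun i j => (Submodule.Quotient.mk_eq_zero S).2 (hS i j)
  exact (Submodule.Quotient.mk_eq_zero S).1 (LinearMap.congr_fun₂ this x y)

def LinearMap.toLieHomOfCommRing {R L A : Type*} [CommRing R] [LieRing L] [LieAlgebra R L]
    [CommRing A] [Algebra R A] (ℓ : L →ₗ[R] A) (hℓ : ∀ x y : L, ℓ ⁅x, y⁆ = 0) : L →ₗ⁅R⁆ A :=
  { ℓ with
    map_lie' := fun {x y} => by
      rw [AddHom.toFun_eq_coe, LinearMap.coe_toAddHom, hℓ, LieRing.of_associative_ring_bracket,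
        mul_comm, sub_self] }

namespace UniversalEnvelopingAlgebra

variable (R : Type*) {L : Type*} [CommRing R] [LieRing L] [LieAlgebra R L]

theorem adjoin_range_ι :
    Algebra.adjoin R (Set.range (ι R : L → UniversalEnvelopingAlgebra R L)) = ⊤ := by
  have : Set.range (ι R : L → _) = mkAlgHom R L '' Set.range (TensorAlgebra.ι R) := by
    rw [← Set.range_comp]; rfl
  rw [this, ← AlgHom.map_adjoin, TensorAlgebra.adjoin_range_ι, Algebra.map_top,
    AlgHom.range_eq_top]
  exact RingCon.mkₐ_surjective _

theorem commute_of_surjective {A : Type*} [Ring A] [Algebra R A]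
    {π : UniversalEnvelopingAlgebra R L →ₐ[R] A} (hπ : Function.Surjective π)
    (hlie : ∀ x y : L, π (ι R ⁅x, y⁆) = 0) (a b : A) : Commute a b := by
  refine Algebra.commute_of_adjoin_eq_top (R := R) (s := Set.range (π ∘ ι R)) ?_ ?_ a b
  · rw [Set.range_comp, ← AlgHom.map_adjoin, adjoin_range_ι, Algebra.map_top,
      (AlgHom.range_eq_top π).2 hπ]
  · rintro _ ⟨x, rfl⟩ _ ⟨y, rfl⟩
    have := hlie x y
    rwa [LieHom.map_lie, LieRing.of_associative_ring_bracket, map_sub, map_mul, map_mul,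
      sub_eq_zero] at this

variable {R}

theorem algHom_ext_basis {η A : Type*} [Ring A] [Algebra R A] (B : Module.Basis η R L)
    {g₁ g₂ : UniversalEnvelopingAlgebra R L →ₐ[R] A} (h : ∀ i, g₁ (ι R (B i)) = g₂ (ι R (B i))) :
    g₁ = g₂ := by
  have : g₁.toLinearMap.comp (ι R : L →ₗ⁅R⁆ _).toLinearMap =
      g₂.toLinearMap.comp (ι R : L →ₗ⁅R⁆ _).toLinearMap := B.ext h
  exact hom_ext R (LieHom.ext (LinearMap.congr_fun this))

end UniversalEnvelopingAlgebra

theorem heisenberg_lie_mem_span_range {R L κ : Type*} [CommRing R] [LieRing L]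
    [LieAlgebra R L] (B : Module.Basis (κ ⊕ κ ⊕ κ) R L) {e fv h : κ → L}
    (hBe : ∀ j, B (.inl j) = e j) (hBf : ∀ j, B (.inr (.inl j)) = fv j)
    (hBh : ∀ j, B (.inr (.inr j)) = h j) (hef : ∀ j, ⁅e j, fv j⁆ = h j)
    (hef' : ∀ i j, i ≠ j → ⁅e i, fv j⁆ = 0) (hee : ∀ i j, ⁅e i, e j⁆ = 0)
    (hff : ∀ i j, ⁅fv i, fv j⁆ = 0) (hhe : ∀ i j, ⁅h i, e j⁆ = 0)
    (hhf : ∀ i j, ⁅h i, fv j⁆ = 0) (hhh : ∀ i j, ⁅h i, h j⁆ = 0) (x y : L) :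
    ⁅x, y⁆ ∈ Submodule.span R (Set.range h) := by
  have hefS : ∀ i j, ⁅e i, fv j⁆ ∈ Submodule.span R (Set.range h) := fun i j => by
    by_cases hij : i = j
    · subst hij; rw [hef]; exact Submodule.subset_span ⟨i, rfl⟩
    · rw [hef' i j hij]; exact zero_mem _
  refine LieAlgebra.lie_mem_of_basis B (fun i j => ?_) x y
  rcases i with i | i | i <;> rcases j with j | j | j <;>
    simp only [hBe, hBf, hBh, hee, hff, hhe, hhf, hhh, hefS, ← lie_skew (e _) (h _),
      ← lie_skew (fv _) (e _), ← lie_skew (fv _) (h _), neg_zero, zero_mem,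
      Submodule.neg_mem_iff]

noncomputable section

variable {R L κ : Type*} [CommRing R] [LieRing L] [LieAlgebra R L]

variable (R κ) in
abbrev xyIdeal : Ideal (MvPolynomial (κ ⊕ κ) R) :=
  Ideal.span (Set.range fun j => X (.inl j) * X (.inr j))

abbrev heisenbergIdeal (B : Module.Basis (κ ⊕ κ ⊕ κ) R L) :
    Ideal (UniversalEnvelopingAlgebra R L) :=
  twoSidedSpan (Set.range (fun j => ι R (B (.inl j)) * ι R (B (.inr (.inl j)))) ∪
    Set.range fun j => ι R (B (.inr (.inr j))))

variable {B : Module.Basis (κ ⊕ κ ⊕ κ) R L}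
  (hder : ∀ x y : L, ⁅x, y⁆ ∈ Submodule.span R (Set.range fun j => B (.inr (.inr j))))
include hder

def toXYQuotient : UniversalEnvelopingAlgebra R L →ₐ[R] MvPolynomial (κ ⊕ κ) R ⧸ xyIdeal R κ :=
  lift R <| LinearMap.toLieHomOfCommRing
    (B.constr R <| Sum.elim (fun j => Ideal.Quotient.mk _ (X (.inl j)))
      (Sum.elim (fun j => Ideal.Quotient.mk _ (X (.inr j))) 0))
    fun x y => LinearMap.mem_ker.1 <| Submodule.span_le.2
      (Set.range_subset_iff.2 fun _ => LinearMap.mem_ker.2 (B.constr_basis R _ _)) (hder x y)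

@[simp]
theorem toXYQuotient_ι_e (j : κ) :
    toXYQuotient hder (ι R (B (.inl j))) = Ideal.Quotient.mk _ (X (.inl j)) :=
  (lift_ι_apply R _ _).trans (B.constr_basis R _ _)

@[simp]
theorem toXYQuotient_ι_f (j : κ) :
    toXYQuotient hder (ι R (B (.inr (.inl j)))) = Ideal.Quotient.mk _ (X (.inr j)) :=
  (lift_ι_apply R _ _).trans (B.constr_basis R _ _)

@[simp]
theorem toXYQuotient_ι_h (j : κ) : toXYQuotient hder (ι R (B (.inr (.inr j)))) = 0 :=
  (lift_ι_apply R _ _).trans (B.constr_basis R _ _)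

theorem toXYQuotient_eq_zero_of_mem (a : UniversalEnvelopingAlgebra R L)
    (ha : a ∈ heisenbergIdeal B) : toXYQuotient hder a = 0 := by
  refine RingHom.mem_ker.1 <| (Ideal.span_le (I := RingHom.ker (toXYQuotient hder))).2 ?_ ha
  rintro _ ⟨b, hb, u, v, rfl⟩
  have : toXYQuotient hder b = 0 := by
    rcases hb with ⟨j, rfl⟩ | ⟨j, rfl⟩
    · rw [map_mul, toXYQuotient_ι_e, toXYQuotient_ι_f, ← map_mul]
      exact Ideal.Quotient.eq_zero_iff_mem.2 (Ideal.subset_span ⟨j, rfl⟩)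
    · exact toXYQuotient_ι_h hder j
  rw [SetLike.mem_coe, RingHom.mem_ker, map_mul, map_mul, this, mul_zero, zero_mul]

def quotientToXYQuotient : UniversalEnvelopingAlgebra R L ⧸ heisenbergIdeal B →ₐ[R]
    MvPolynomial (κ ⊕ κ) R ⧸ xyIdeal R κ :=
  Ideal.Quotient.liftₐ _ (toXYQuotient hder) (toXYQuotient_eq_zero_of_mem hder)

@[simp]
theorem quotientToXYQuotient_mk (a : UniversalEnvelopingAlgebra R L) :
    quotientToXYQuotient hder (Ideal.Quotient.mk _ a) = toXYQuotient hder a :=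
  rfl

theorem ι_lie_mem_heisenbergIdeal (x y : L) : ι R ⁅x, y⁆ ∈ heisenbergIdeal B := by
  have : Submodule.span R (Set.range fun j => B (.inr (.inr j))) ≤
      ((heisenbergIdeal B).restrictScalars R).comap (ι R : L →ₗ⁅R⁆ _).toLinearMap :=
    Submodule.span_le.2 (Set.range_subset_iff.2 fun j => subset_twoSidedSpan _ (Or.inr ⟨j, rfl⟩))
  exact this (hder x y)

theorem isMulCommutative_quotient_heisenbergIdeal :
    IsMulCommutative (UniversalEnvelopingAlgebra R L ⧸ heisenbergIdeal B) :=
  ⟨⟨fun a b => (commute_of_surjective R (Ideal.Quotient.mkₐ_surjective R _)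
    (fun x y => Ideal.Quotient.eq_zero_iff_mem.2 (ι_lie_mem_heisenbergIdeal hder x y)) a b).eq⟩⟩

-- `aeval` needs a commutative target; the scoped instance turns `IsMulCommutative` into one.
open scoped IsMulCommutative in
def xyQuotientToQuotient : MvPolynomial (κ ⊕ κ) R ⧸ xyIdeal R κ →ₐ[R]
    UniversalEnvelopingAlgebra R L ⧸ heisenbergIdeal B :=
  haveI := isMulCommutative_quotient_heisenbergIdeal hder
  Ideal.Quotient.liftₐ _ (aeval fun k => Ideal.Quotient.mk _ (ι R (B (Sum.map id .inl k))))
    fun a ha => RingHom.mem_ker.1 <| by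
      refine (Ideal.span_le (I := RingHom.ker (aeval _))).2 ?_ ha
      rintro _ ⟨j, rfl⟩
      rw [SetLike.mem_coe, RingHom.mem_ker, map_mul, aeval_X, aeval_X, Sum.map_inl, Sum.map_inr,
        id, ← map_mul, Ideal.Quotient.eq_zero_iff_mem]
      exact subset_twoSidedSpan _ (Or.inl ⟨j, rfl⟩)

open scoped IsMulCommutative in
@[simp]
theorem xyQuotientToQuotient_mk_X (k : κ ⊕ κ) :
    xyQuotientToQuotient hder (Ideal.Quotient.mk _ (X k)) =
      Ideal.Quotient.mk _ (ι R (B (Sum.map id .inl k))) := by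
  have := isMulCommutative_quotient_heisenbergIdeal hder
  exact aeval_X _ k

def heisenbergQuotientEquiv : (UniversalEnvelopingAlgebra R L ⧸ heisenbergIdeal B) ≃ₐ[R]
    MvPolynomial (κ ⊕ κ) R ⧸ xyIdeal R κ :=
  AlgEquiv.ofAlgHom (quotientToXYQuotient hder) (xyQuotientToQuotient hder)
    (by
      refine Ideal.Quotient.algHom_ext _ (MvPolynomial.algHom_ext fun k => ?_)
      rcases k with j | j <;> simp [-ι_apply])
    (by
      refine Ideal.Quotient.algHom_ext _ (algHom_ext_basis B fun k => ?_)
      rcases k with j | j | j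
      · simp [-ι_apply]
      · simp [-ι_apply]
      · simp only [AlgHom.coe_comp, Ideal.Quotient.mkₐ_eq_mk, Function.comp_apply,
          quotientToXYQuotient_mk, toXYQuotient_ι_h, map_zero, AlgHom.id_comp]
        rw [eq_comm, Ideal.Quotient.eq_zero_iff_mem]
        exact subset_twoSidedSpan _ (Or.inr ⟨j, rfl⟩))

end

theorem statement11_general {F : Type*} [Field F] {f : ℕ}
    {L : Type*} [LieRing L] [LieAlgebra F L]
    (e fv h : Fin f → L)
    (B : Module.Basis ((Fin f) ⊕ (Fin f) ⊕ (Fin f)) F L)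
    (hBe : ∀ j, B (Sum.inl j) = e j)
    (hBf : ∀ j, B (Sum.inr (Sum.inl j)) = fv j)
    (hBh : ∀ j, B (Sum.inr (Sum.inr j)) = h j)
    (hef : ∀ j, ⁅e j, fv j⁆ = h j)
    (hef' : ∀ i j, i ≠ j → ⁅e i, fv j⁆ = 0)
    (hee : ∀ i j, ⁅e i, e j⁆ = 0)
    (hff : ∀ i j, ⁅fv i, fv j⁆ = 0)
    (hhe : ∀ i j, ⁅h i, e j⁆ = 0)
    (hhf : ∀ i j, ⁅h i, fv j⁆ = 0)
    (hhh : ∀ i j, ⁅h i, h j⁆ = 0) :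
    ∃ Φ : UniversalEnvelopingAlgebra F L →ₐ[F]
        (MvPolynomial ((Fin f) ⊕ (Fin f)) F ⧸
          Ideal.span (Set.range fun j : Fin f =>
            (MvPolynomial.X (Sum.inl j) : MvPolynomial ((Fin f) ⊕ (Fin f)) F) *
              MvPolynomial.X (Sum.inr j))),
      Function.Surjective Φ ∧
      (∀ j, Φ (UniversalEnvelopingAlgebra.ι F (e j)) =
        Ideal.Quotient.mk _ (MvPolynomial.X (Sum.inl j))) ∧
      (∀ j, Φ (UniversalEnvelopingAlgebra.ι F (fv j)) =
        Ideal.Quotient.mk _ (MvPolynomial.X (Sum.inr j))) ∧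
      RingHom.ker Φ.toRingHom =
        twoSidedSpan
          ((Set.range fun j : Fin f =>
              UniversalEnvelopingAlgebra.ι F (e j) * UniversalEnvelopingAlgebra.ι F (fv j)) ∪
            (Set.range fun j : Fin f => UniversalEnvelopingAlgebra.ι F (h j))) := by
  have hder := heisenberg_lie_mem_span_range B hBe hBf hBh hef hef' hee hff hhe hhf hhh
  obtain rfl : e = fun j => B (.inl j) := funext fun j => (hBe j).symm
  obtain rfl : fv = fun j => B (.inr (.inl j)) := funext fun j => (hBf j).symm
  obtain rfl : h = fun j => B (.inr (.inr j)) := funext fun j => (hBh j).symm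
  let Ψ := heisenbergQuotientEquiv hder
  refine ⟨Ψ.toAlgHom.comp (Ideal.Quotient.mkₐ F _),
    Ψ.surjective.comp (Ideal.Quotient.mkₐ_surjective F _),
    toXYQuotient_ι_e hder, toXYQuotient_ι_f hder, ?_⟩
  exact (RingHom.ker_comp_of_injective _ Ψ.injective).trans Ideal.mk_ker

/-- Let `g` be the Lie algebra over a field `F` with basis
`{e_j, f_j, h_j : 0 ≤ j ≤ f−1}` and only nonzero brackets `⁅e_j, f_j⁆ = h_j`
(a direct sum of `f` copies of the Heisenberg Lie algebra).  The quotient of `U(g)` by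
the two-sided ideal generated by the `2f` elements `e_j·f_j` and `h_j` is isomorphic as
an `F`-algebra to `F[X_j, Y_j : 0 ≤ j ≤ f−1]/(X_j·Y_j : 0 ≤ j ≤ f−1)`, via `e_j ↦ X_j`
and `f_j ↦ Y_j`. -/
theorem statement11 {F : Type*} [Field F] {f : ℕ} (hf : 1 ≤ f)
    {L : Type*} [LieRing L] [LieAlgebra F L]
    (e fv h : Fin f → L)
    (B : Module.Basis ((Fin f) ⊕ (Fin f) ⊕ (Fin f)) F L)
    (hBe : ∀ j, B (Sum.inl j) = e j)
    (hBf : ∀ j, B (Sum.inr (Sum.inl j)) = fv j)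
    (hBh : ∀ j, B (Sum.inr (Sum.inr j)) = h j)
    (hef : ∀ j, ⁅e j, fv j⁆ = h j)
    (hef' : ∀ i j, i ≠ j → ⁅e i, fv j⁆ = 0)
    (hee : ∀ i j, ⁅e i, e j⁆ = 0)
    (hff : ∀ i j, ⁅fv i, fv j⁆ = 0)
    (hhe : ∀ i j, ⁅h i, e j⁆ = 0)
    (hhf : ∀ i j, ⁅h i, fv j⁆ = 0)
    (hhh : ∀ i j, ⁅h i, h j⁆ = 0) :
    ∃ Φ : UniversalEnvelopingAlgebra F L →ₐ[F]
        (MvPolynomial ((Fin f) ⊕ (Fin f)) F ⧸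
          Ideal.span (Set.range fun j : Fin f =>
            (MvPolynomial.X (Sum.inl j) : MvPolynomial ((Fin f) ⊕ (Fin f)) F) *
              MvPolynomial.X (Sum.inr j))),
      Function.Surjective Φ ∧
      (∀ j, Φ (UniversalEnvelopingAlgebra.ι F (e j)) =
        Ideal.Quotient.mk _ (MvPolynomial.X (Sum.inl j))) ∧
      (∀ j, Φ (UniversalEnvelopingAlgebra.ι F (fv j)) =
        Ideal.Quotient.mk _ (MvPolynomial.X (Sum.inr j))) ∧
      RingHom.ker Φ.toRingHom =
        twoSidedSpan
          ((Set.range fun j : Fin f =>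
              UniversalEnvelopingAlgebra.ι F (e j) * UniversalEnvelopingAlgebra.ι F (fv j)) ∪
            (Set.range fun j : Fin f => UniversalEnvelopingAlgebra.ι F (h j))) :=
  statement11_general e fv h B hBe hBf hBh hef hef' hee hff hhe hhf hhh
end
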